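/- arXiv:2308.11586 — 7 statements merged into one kernel-verified Lean document; each statement's English description precedes it below -/
import Mathlib

section
/- Let (A, ‖·‖) be a normed algebra. The following are equivalent: (a) the given norm on A is maximal, i.e., for every algebra norm ν on A there is a constant C > 0 such that ν(a) ≤ C·‖a‖ for every a ∈ A; (b) every homomorphism from A into a normed algebra is continuous; (c) every injective homomorphism from A into a Banach algebra is continuous. -/
universe u

/-- A function `ν : A → ℝ` is an algebra norm on the algebra `A` over `𝕜` if it is a norm
(definite, subadditive, absolutely homogeneous) which is submultiplicative. -/
def IsAlgebraNorm (𝕜 : Type*) [RCLike 𝕜] {A : Type*} [NonUnitalRing A] [Module 𝕜 A]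
    (ν : A → ℝ) : Prop :=
  (∀ a : A, ν a = 0 ↔ a = 0) ∧ (∀ a b : A, ν (a + b) ≤ ν a + ν b) ∧
    (∀ (c : 𝕜) (a : A), ν (c • a) = ‖c‖ * ν a) ∧ ∀ a b : A, ν (a * b) ≤ ν a * ν b

/-! For a homomorphism `φ`, the function `‖φ ·‖ + ‖·‖` is an algebra norm, so a maximal norm
bounds `‖φ a‖` by a multiple of `‖a‖`: this gives (a) ⇒ (b), and (b) ⇒ (c) is immediate.
Conversely, an algebra norm `ν` makes `A` a normed algebra, and the inclusion of `A` into the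
completion of `(A, ν)` is an injective homomorphism into a Banach algebra; by (c) it is continuous,
which bounds `ν` by a multiple of `‖·‖`. -/

noncomputable section

open UniformSpace Function

namespace UniformSpace.Completion

-- Mathlib's `UniformSpace.Completion.ring` needs a unit; these are its non-unital counterparts.

section NonUnitalRing

variable {α : Type*} [NonUnitalRing α] [UniformSpace α]

instance nonUnitalMul : Mul (Completion α) :=
  ⟨curry <| (isDenseInducing_coe.prodMap isDenseInducing_coe).extend ((↑) ∘ uncurry (· * ·))⟩

variable [IsTopologicalRing α]

theorem coe_mul' (a b : α) : ((a * b : α) : Completion α) = a * b :=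
  ((isDenseInducing_coe.prodMap isDenseInducing_coe).extend_eq
      ((continuous_coe α).comp continuous_mul) (a, b)).symm

variable [IsUniformAddGroup α]

instance continuousMul' : ContinuousMul (Completion α) where
  continuous_mul := by
    let m := (AddMonoidHom.mul : α →+ α →+ α).compr₂ toCompl
    have : Continuous fun p : α × α => m p.1 p.2 := (continuous_coe α).comp continuous_mul
    have di : IsDenseInducing (toCompl : α → Completion α) := isDenseInducing_coe
    exact (di.extend_Z_bilin di this :)

instance nonUnitalRing : NonUnitalRing (Completion α) :=
  { (inferInstance : AddCommGroup (Completion α)), nonUnitalMul with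
    zero_mul a :=
      Completion.induction_on a (isClosed_eq (by fun_prop) continuous_const)
        fun a => by rw [← coe_zero, ← coe_mul', zero_mul]
    mul_zero a :=
      Completion.induction_on a (isClosed_eq (by fun_prop) continuous_const)
        fun a => by rw [← coe_zero, ← coe_mul', mul_zero]
    mul_assoc a b c :=
      Completion.induction_on₃ a b c (isClosed_eq (by fun_prop) (by fun_prop))
        fun a b c => by rw [← coe_mul', ← coe_mul', ← coe_mul', ← coe_mul', mul_assoc]
    left_distrib a b c :=
      Completion.induction_on₃ a b c (isClosed_eq (by fun_prop) (by fun_prop))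
        fun a b c => by rw [← coe_add, ← coe_mul', ← coe_mul', ← coe_mul', ← coe_add, mul_add]
    right_distrib a b c :=
      Completion.induction_on₃ a b c (isClosed_eq (by fun_prop) (by fun_prop))
        fun a b c => by rw [← coe_add, ← coe_mul', ← coe_mul', ← coe_mul', ← coe_add, add_mul] }

end NonUnitalRing

section NonUnitalSeminormedRing

variable {α : Type*} [NonUnitalSeminormedRing α]

instance nonUnitalNormedRing : NonUnitalNormedRing (Completion α) :=
  { (inferInstance : NormedAddCommGroup (Completion α)), nonUnitalRing with
    norm_mul_le x y := by
      induction x, y using Completion.induction_on₂ with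
      | hp => exact isClosed_le (by fun_prop) (by fun_prop)
      | ih x y => simpa only [← coe_mul', norm_coe] using norm_mul_le x y }

variable (𝕜 : Type*) [NormedField 𝕜] [NormedSpace 𝕜 α]

instance isScalarTower_self [IsScalarTower 𝕜 α α] :
    IsScalarTower 𝕜 (Completion α) (Completion α) where
  smul_assoc c x y := by
    change (c • x) * y = c • (x * y)
    induction x, y using Completion.induction_on₂ with
    | hp =>
      exact isClosed_eq (((continuous_const_smul c).comp continuous_fst).mul continuous_snd)
        ((continuous_const_smul c).comp continuous_mul)
    | ih x y => rw [← coe_smul, ← coe_mul', ← coe_mul', ← coe_smul, smul_mul_assoc]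

instance smulCommClass_self [SMulCommClass 𝕜 α α] :
    SMulCommClass 𝕜 (Completion α) (Completion α) where
  smul_comm c x y := by
    change c • (x * y) = x * (c • y)
    induction x, y using Completion.induction_on₂ with
    | hp =>
      exact isClosed_eq ((continuous_const_smul c).comp continuous_mul)
        (continuous_fst.mul ((continuous_const_smul c).comp continuous_snd))
    | ih x y => rw [← coe_smul, ← coe_mul', ← coe_mul', ← coe_smul, mul_smul_comm]

def coeNonUnitalAlgHom : α →ₙₐ[𝕜] Completion α where
  toFun := (↑)
  map_smul' := coe_smul
  map_zero' := coe_zero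
  map_add' := coe_add
  map_mul' := coe_mul'

end NonUnitalSeminormedRing

end UniformSpace.Completion

section AlgebraNorm

variable {𝕜 : Type*} [RCLike 𝕜] {A : Type*} [NonUnitalRing A] [Module 𝕜 A] {ν : A → ℝ}

theorem IsAlgebraNorm.map_neg (hν : IsAlgebraNorm 𝕜 ν) (a : A) : ν (-a) = ν a := by
  simpa using hν.2.2.1 (-1) a

def IsAlgebraNorm.toAddGroupNorm (hν : IsAlgebraNorm 𝕜 ν) : AddGroupNorm A where
  toFun := ν
  map_zero' := (hν.1 0).2 rfl
  add_le' := hν.2.1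
  neg' := hν.map_neg
  eq_zero_of_map_eq_zero' a := (hν.1 a).1

-- Indexed by the proof `hν` so that the normed-ring instances below can use it.
def WithAlgebraNorm (_hν : IsAlgebraNorm 𝕜 ν) : Type _ := A

namespace WithAlgebraNorm

variable (hν : IsAlgebraNorm 𝕜 ν)

instance : NonUnitalRing (WithAlgebraNorm hν) := ‹NonUnitalRing A›

instance : Module 𝕜 (WithAlgebraNorm hν) := ‹Module 𝕜 A›

instance : NonUnitalNormedRing (WithAlgebraNorm hν) :=
  { hν.toAddGroupNorm.toNormedAddCommGroup, (inferInstance : NonUnitalRing A) with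
    norm_mul_le := hν.2.2.2 }

instance : NormedSpace 𝕜 (WithAlgebraNorm hν) := ⟨fun c a => (hν.2.2.1 c a).le⟩

instance [IsScalarTower 𝕜 A A] : IsScalarTower 𝕜 (WithAlgebraNorm hν) (WithAlgebraNorm hν) :=
  ‹IsScalarTower 𝕜 A A›

instance [SMulCommClass 𝕜 A A] : SMulCommClass 𝕜 (WithAlgebraNorm hν) (WithAlgebraNorm hν) :=
  ‹SMulCommClass 𝕜 A A›

def toWithAlgebraNorm : A →ₙₐ[𝕜] WithAlgebraNorm hν := NonUnitalAlgHom.id 𝕜 A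

end WithAlgebraNorm

def IsAlgebraNorm.toCompletion (hν : IsAlgebraNorm 𝕜 ν) :
    A →ₙₐ[𝕜] Completion (WithAlgebraNorm hν) :=
  (Completion.coeNonUnitalAlgHom 𝕜).comp (WithAlgebraNorm.toWithAlgebraNorm hν)

theorem IsAlgebraNorm.injective_toCompletion (hν : IsAlgebraNorm 𝕜 ν) :
    Injective hν.toCompletion :=
  Completion.coe_injective (WithAlgebraNorm hν)

theorem IsAlgebraNorm.norm_toCompletion (hν : IsAlgebraNorm 𝕜 ν) (a : A) :
    ‖hν.toCompletion a‖ = ν a :=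
  Completion.norm_coe _

end AlgebraNorm

def NormIsMaximal (𝕜 : Type*) [RCLike 𝕜] (A : Type*) [NonUnitalNormedRing A] [Module 𝕜 A] :
    Prop :=
  ∀ ν : A → ℝ, IsAlgebraNorm 𝕜 ν → ∃ C > 0, ∀ a : A, ν a ≤ C * ‖a‖

section MaximalNorm

variable {𝕜 : Type*} [RCLike 𝕜] {A : Type*} [NonUnitalNormedRing A] [NormedSpace 𝕜 A]

theorem NonUnitalAlgHom.isAlgebraNorm_norm_apply_add_norm {B : Type*} [NonUnitalNormedRing B]
    [NormedSpace 𝕜 B] (φ : A →ₙₐ[𝕜] B) : IsAlgebraNorm 𝕜 fun a => ‖φ a‖ + ‖a‖ := by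
  refine ⟨fun a => ⟨fun h => ?_, fun h => by simp [h]⟩, fun a b => ?_, fun c a => ?_,
    fun a b => ?_⟩
  · exact norm_eq_zero.1 (le_antisymm (by linarith [norm_nonneg (φ a)]) (norm_nonneg a))
  · simp only [map_add]
    linarith [norm_add_le (φ a) (φ b), norm_add_le a b]
  · simp only [map_smul, norm_smul]
    ring
  · simp only [map_mul]
    nlinarith [norm_mul_le (φ a) (φ b), norm_mul_le a b, norm_nonneg (φ a), norm_nonneg (φ b),
      norm_nonneg a, norm_nonneg b]

theorem NonUnitalAlgHom.continuous_of_normIsMaximal (hA : NormIsMaximal 𝕜 A) {B : Type*}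
    [NonUnitalNormedRing B] [NormedSpace 𝕜 B] (φ : A →ₙₐ[𝕜] B) : Continuous φ := by
  obtain ⟨C, -, hC⟩ := hA _ φ.isAlgebraNorm_norm_apply_add_norm
  exact AddMonoidHomClass.continuous_of_bound φ C fun a => by linarith [hC a, norm_nonneg a]

end MaximalNorm

end

/-- For a normed algebra `A` the following are equivalent:
(a) the given norm on `A` is maximal;
(b) every homomorphism from `A` into a normed algebra is continuous;
(c) every injective homomorphism from `A` into a Banach algebra is continuous. -/
theorem statement3 {𝕜 : Type*} [RCLike 𝕜] (A : Type u) [NonUnitalNormedRing A]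
    [NormedSpace 𝕜 A] [IsScalarTower 𝕜 A A] [SMulCommClass 𝕜 A A] :
    ((∀ ν : A → ℝ, IsAlgebraNorm 𝕜 ν → ∃ C > 0, ∀ a : A, ν a ≤ C * ‖a‖) ↔
      (∀ (B : Type u) [NonUnitalNormedRing B] [NormedSpace 𝕜 B] [IsScalarTower 𝕜 B B]
        [SMulCommClass 𝕜 B B] (φ : A →ₙₐ[𝕜] B), Continuous φ)) ∧
    ((∀ (B : Type u) [NonUnitalNormedRing B] [NormedSpace 𝕜 B] [IsScalarTower 𝕜 B B]
        [SMulCommClass 𝕜 B B] (φ : A →ₙₐ[𝕜] B), Continuous φ) ↔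
      (∀ (B : Type u) [NonUnitalNormedRing B] [NormedSpace 𝕜 B] [IsScalarTower 𝕜 B B]
        [SMulCommClass 𝕜 B B] [CompleteSpace B] (φ : A →ₙₐ[𝕜] B),
          Function.Injective φ → Continuous φ)) := by
  have maximal_continuous : NormIsMaximal 𝕜 A → ∀ (B : Type u) [NonUnitalNormedRing B]
      [NormedSpace 𝕜 B] [IsScalarTower 𝕜 B B] [SMulCommClass 𝕜 B B] (φ : A →ₙₐ[𝕜] B),
      Continuous φ :=
    fun hA _ _ _ _ _ φ => φ.continuous_of_normIsMaximal hA
  have injective_maximal : (∀ (B : Type u) [NonUnitalNormedRing B] [NormedSpace 𝕜 B]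
      [IsScalarTower 𝕜 B B] [SMulCommClass 𝕜 B B] [CompleteSpace B] (φ : A →ₙₐ[𝕜] B),
      Function.Injective φ → Continuous φ) → NormIsMaximal 𝕜 A := by
    intro hc ν hν
    obtain ⟨C, hC, hbound⟩ := SemilinearMapClass.bound_of_continuous hν.toCompletion
      (hc _ _ hν.injective_toCompletion)
    exact ⟨C, hC, fun a => hν.norm_toCompletion a ▸ hbound a⟩
  exact ⟨⟨maximal_continuous, fun hb => injective_maximal fun B _ _ _ _ _ φ _ => hb B φ⟩,
    ⟨fun hb B _ _ _ _ _ φ _ => hb B φ, fun hc => maximal_continuous (injective_maximal hc)⟩⟩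
end

section
/- Let X be a Banach space and let A be a subalgebra of B(X) which contains every bounded finite-rank operator on X. Then the operator norm on A is minimal: for every algebra norm ν on A there is a constant C > 0 such that ‖T‖ ≤ C·ν(T) for every T ∈ A. -/
namespace IsAlgebraNorm

variable {𝕜 : Type*} [RCLike 𝕜] {A : Type*} [NonUnitalRing A] [Module 𝕜 A] {ν : A → ℝ}

theorem eq_zero_iff (hν : IsAlgebraNorm 𝕜 ν) (a : A) : ν a = 0 ↔ a = 0 := hν.1 a

theorem map_add_le (hν : IsAlgebraNorm 𝕜 ν) (a b : A) : ν (a + b) ≤ ν a + ν b := hν.2.1 a b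

theorem map_smul (hν : IsAlgebraNorm 𝕜 ν) (c : 𝕜) (a : A) : ν (c • a) = ‖c‖ * ν a :=
  hν.2.2.1 c a

theorem map_mul_le (hν : IsAlgebraNorm 𝕜 ν) (a b : A) : ν (a * b) ≤ ν a * ν b := hν.2.2.2 a b

theorem map_neg_s5 (hν : IsAlgebraNorm 𝕜 ν) (a : A) : ν (-a) = ν a := by
  rw [← neg_one_smul 𝕜 a, hν.map_smul, norm_neg, norm_one, one_mul]

theorem nonneg (hν : IsAlgebraNorm 𝕜 ν) (a : A) : 0 ≤ ν a := by
  have h := hν.map_add_le a (-a)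
  rw [add_neg_cancel, (hν.eq_zero_iff 0).mpr rfl, hν.map_neg_s5] at h
  linarith

theorem pos_of_ne_zero (hν : IsAlgebraNorm 𝕜 ν) {a : A} (ha : a ≠ 0) : 0 < ν a :=
  (hν.nonneg a).lt_of_ne' fun h => ha ((hν.eq_zero_iff a).mp h)

theorem map_mul_mul_le (hν : IsAlgebraNorm 𝕜 ν) (a b c : A) : ν (a * b * c) ≤ ν a * ν b * ν c :=
  (hν.map_mul_le _ c).trans (mul_le_mul_of_nonneg_right (hν.map_mul_le a b) (hν.nonneg c))

theorem le_mul_of_forall_le_one (hν : IsAlgebraNorm 𝕜 ν) {g : A → ℝ}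
    (hg : ∀ (c : 𝕜) (a : A), g (c • a) = ‖c‖ * g a) {M : ℝ} (hM : ∀ a, ν a ≤ 1 → g a ≤ M)
    (a : A) : g a ≤ M * ν a := by
  rcases (hν.nonneg a).eq_or_lt with h | h
  · rw [← h, (hν.eq_zero_iff a).mp h.symm, mul_zero, ← zero_smul 𝕜 (0 : A), hg, norm_zero,
      zero_mul]
  · have hc : ‖(((ν a)⁻¹ : ℝ) : 𝕜)‖ = (ν a)⁻¹ := by
      rw [RCLike.norm_ofReal, abs_of_pos (inv_pos.mpr h)]
    have hscaled := hM ((((ν a)⁻¹ : ℝ) : 𝕜) • a) (by rw [hν.map_smul, hc, inv_mul_cancel₀ h.ne'])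
    rw [hg, hc, inv_mul_le_iff₀ h] at hscaled
    linarith

end IsAlgebraNorm

namespace ContinuousLinearMap

variable {𝕜 : Type*} [RCLike 𝕜]

theorem smulRight_comp_comp_smulRight {D E F G : Type*} [NormedAddCommGroup D]
    [NormedSpace 𝕜 D] [NormedAddCommGroup E] [NormedSpace 𝕜 E] [NormedAddCommGroup F]
    [NormedSpace 𝕜 F] [NormedAddCommGroup G] [NormedSpace 𝕜 G] (g : StrongDual 𝕜 F) (u : G)
    (T : E →L[𝕜] F) (f : StrongDual 𝕜 D) (x : E) :
    g.smulRight u ∘L T ∘L f.smulRight x = g (T x) • f.smulRight u := by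
  ext y
  simp [smul_smul, mul_comm]

theorem finiteDimensional_range_smulRight {E F : Type*} [NormedAddCommGroup E]
    [NormedSpace 𝕜 E] [NormedAddCommGroup F] [NormedSpace 𝕜 F] (f : StrongDual 𝕜 E) (x : F) :
    FiniteDimensional 𝕜 (LinearMap.range (f.smulRight x : E →ₗ[𝕜] F)) := by
  refine Submodule.finiteDimensional_of_le (S₂ := Submodule.span 𝕜 {x}) ?_
  rintro _ ⟨y, rfl⟩
  exact Submodule.smul_mem _ _ (Submodule.mem_span_singleton_self x)

end ContinuousLinearMap

section UniformBoundedness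

variable {𝕜 : Type*} [RCLike 𝕜] {E F : Type*} [NormedAddCommGroup E] [NormedSpace 𝕜 E]
  [NormedAddCommGroup F] [NormedSpace 𝕜 F] {ι : Type*}

theorem exists_norm_le_of_forall_exists_norm_apply_le {v : ι → E}
    (h : ∀ f : StrongDual 𝕜 E, ∃ C, ∀ i, ‖f (v i)‖ ≤ C) : ∃ C, ∀ i, ‖v i‖ ≤ C := by
  obtain ⟨C, hC⟩ := banach_steinhaus (g := fun i => NormedSpace.inclusionInDoubleDualLi 𝕜 (v i)) h
  exact ⟨C, fun i => (LinearIsometry.norm_map _ (v i)).symm.trans_le (hC i)⟩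

theorem exists_opNorm_le_of_forall_exists_norm_apply_apply_le [CompleteSpace E]
    {T : ι → E →L[𝕜] F} (h : ∀ (f : StrongDual 𝕜 F) (x : E), ∃ C, ∀ i, ‖f (T i x)‖ ≤ C) :
    ∃ C, ∀ i, ‖T i‖ ≤ C :=
  banach_steinhaus fun x => exists_norm_le_of_forall_exists_norm_apply_le fun f => h f x

end UniformBoundedness

theorem IsAlgebraNorm.exists_norm_apply_apply_le {𝕜 : Type*} [RCLike 𝕜] {X : Type*}
    [NormedAddCommGroup X] [NormedSpace 𝕜 X] {A : NonUnitalSubalgebra 𝕜 (X →L[𝕜] X)}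
    (hA : ∀ T : X →L[𝕜] X, FiniteDimensional 𝕜 ↥(LinearMap.range (T : X →ₗ[𝕜] X)) → T ∈ A)
    {ν : ↥A → ℝ} (hν : IsAlgebraNorm 𝕜 ν) (f : StrongDual 𝕜 X) (x : X) :
    ∃ C, ∀ T : ↥A, ν T ≤ 1 → ‖f ((T : X →L[𝕜] X) x)‖ ≤ C := by
  by_cases hx : x = 0
  · exact ⟨0, fun T _ => by simp [hx]⟩
  obtain ⟨f₀, -, hf₀x⟩ := exists_dual_vector 𝕜 x (norm_ne_zero_iff.mpr hx)
  let L : ↥A := ⟨f.smulRight x, hA _ (f.finiteDimensional_range_smulRight x)⟩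
  let R : ↥A := ⟨f₀.smulRight x, hA _ (f₀.finiteDimensional_range_smulRight x)⟩
  have hR : 0 < ν R := by
    refine hν.pos_of_ne_zero fun hR0 => hx ?_
    have hRx : f₀ x • x = 0 := congrArg (fun S : ↥A => (S : X →L[𝕜] X) x) hR0
    simp [hf₀x, hx] at hRx
  refine ⟨ν L, fun T hT => le_of_mul_le_mul_right ?_ hR⟩
  have hsandwich : L * T * R = f ((T : X →L[𝕜] X) x) • R :=
    Subtype.ext (ContinuousLinearMap.smulRight_comp_comp_smulRight f x _ f₀ x)
  calc ‖f ((T : X →L[𝕜] X) x)‖ * ν R = ν (L * T * R) := by rw [hsandwich, hν.map_smul]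
    _ ≤ ν L * ν T * ν R := hν.map_mul_mul_le L T R
    _ ≤ ν L * ν R :=
      mul_le_mul_of_nonneg_right (mul_le_of_le_one_right (hν.nonneg L) hT) (hν.nonneg R)

/-- Let `X` be a Banach space and `A` a subalgebra of `B(X)` containing
every bounded finite-rank operator. Then the operator norm on `A` is minimal: for every
algebra norm `ν` on `A` there is `C > 0` with `‖T‖ ≤ C * ν T` for every `T ∈ A`. -/
theorem statement5 {𝕜 : Type*} [RCLike 𝕜] {X : Type*} [NormedAddCommGroup X]
    [NormedSpace 𝕜 X] [CompleteSpace X]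
    (A : NonUnitalSubalgebra 𝕜 (X →L[𝕜] X))
    (hA : ∀ T : X →L[𝕜] X, FiniteDimensional 𝕜 ↥(LinearMap.range (T : X →ₗ[𝕜] X)) → T ∈ A)
    (ν : ↥A → ℝ) (hν : IsAlgebraNorm 𝕜 ν) :
    ∃ C > 0, ∀ T : ↥A, ‖(T : X →L[𝕜] X)‖ ≤ C * ν T := by
  obtain ⟨M, hM⟩ := exists_opNorm_le_of_forall_exists_norm_apply_apply_le
    (T := fun T : {T : ↥A // ν T ≤ 1} => (T : X →L[𝕜] X)) fun f x => by
      obtain ⟨C, hC⟩ := hν.exists_norm_apply_apply_le hA f x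
      exact ⟨C, fun T => hC T T.2⟩
  refine ⟨max M 1, by positivity, fun T => ?_⟩
  calc ‖(T : X →L[𝕜] X)‖ ≤ M * ν T :=
        hν.le_mul_of_forall_le_one (g := fun T => ‖(T : X →L[𝕜] X)‖)
          (fun c T => norm_smul c (T : X →L[𝕜] X)) (fun T hT => hM ⟨T, hT⟩) T
    _ ≤ max M 1 * ν T := by gcongr; exacts [hν.nonneg T, le_max_left M 1]
end

section
/- Let C ≥ 1 and let A be a normed algebra with the C-idempotent-factorization property: for every a ∈ A with ‖a‖ = 1 there exist b, c ∈ A with ‖b‖·‖c‖ ≤ C such that bac is a nonzero idempotent ((bac)² = bac ≠ 0). Then for every normed algebra B, every injective homomorphism φ : A → B, and every constant M > 0 such that ‖φ(a)‖ ≤ M·‖a‖ for all a ∈ A, one has ‖φ(a)‖ ≥ ‖a‖/(C·M²) for all a ∈ A. In particular, A is uniformly incompressible. -/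
universe u

/-- Let `C ≥ 1` and let `A` be a normed algebra with the
`C`-idempotent-factorization property: for every `a ∈ A` of norm one there are `b, c ∈ A`
with `‖b‖·‖c‖ ≤ C` such that `bac` is a nonzero idempotent. Then every injective
homomorphism `φ` from `A` into a normed algebra `B` satisfying `‖φ(a)‖ ≤ M·‖a‖` for some
`M > 0` is bounded below: `‖φ(a)‖ ≥ ‖a‖ / (C·M²)` for all `a`. -/
theorem statement7 {𝕜 : Type*} [RCLike 𝕜] (A : Type u) [NonUnitalNormedRing A]
    [NormedSpace 𝕜 A] [IsScalarTower 𝕜 A A] [SMulCommClass 𝕜 A A]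
    (C : ℝ) (hC : 1 ≤ C)
    (hIFP : ∀ a : A, ‖a‖ = 1 → ∃ b c : A, ‖b‖ * ‖c‖ ≤ C ∧
      b * a * c ≠ 0 ∧ (b * a * c) * (b * a * c) = b * a * c)
    (B : Type u) [NonUnitalNormedRing B] [NormedSpace 𝕜 B] [IsScalarTower 𝕜 B B]
    [SMulCommClass 𝕜 B B] (φ : A →ₙₐ[𝕜] B) (hφ : Function.Injective φ)
    (M : ℝ) (hM : 0 < M) (hbound : ∀ a : A, ‖φ a‖ ≤ M * ‖a‖) :
    ∀ a : A, ‖a‖ / (C * M ^ 2) ≤ ‖φ a‖ := by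
  intro a
  have hCM : 0 < C * M ^ 2 := by positivity
  rcases eq_or_ne a 0 with rfl | ha
  · simp
  have hna : 0 < ‖a‖ := norm_pos_iff.mpr ha
  set u : A := (‖a‖ : 𝕜)⁻¹ • a with hu
  have hnu : ‖u‖ = 1 := by
    rw [hu, norm_smul, norm_inv, RCLike.norm_ofReal, abs_of_pos hna,
      inv_mul_cancel₀ hna.ne']
  obtain ⟨b, c, hbc, hne, hidem⟩ := hIFP u hnu
  have hφe : φ (b * u * c) ≠ 0 := fun h => hne (hφ (by simpa using h))
  have h1 : (1 : ℝ) ≤ ‖φ (b * u * c)‖ := by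
    have : ‖φ (b * u * c)‖ ≤ ‖φ (b * u * c)‖ * ‖φ (b * u * c)‖ := by
      calc ‖φ (b * u * c)‖ = ‖φ ((b * u * c) * (b * u * c))‖ := by rw [hidem]
        _ = ‖φ (b * u * c) * φ (b * u * c)‖ := by rw [map_mul]
        _ ≤ ‖φ (b * u * c)‖ * ‖φ (b * u * c)‖ := norm_mul_le _ _
    have hpos : 0 < ‖φ (b * u * c)‖ := norm_pos_iff.mpr hφe
    nlinarith
  have h2 : ‖φ (b * u * c)‖ ≤ C * M ^ 2 * ‖φ u‖ := by
    calc ‖φ (b * u * c)‖ = ‖φ b * φ u * φ c‖ := by rw [map_mul, map_mul]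
      _ ≤ ‖φ b * φ u‖ * ‖φ c‖ := norm_mul_le _ _
      _ ≤ ‖φ b‖ * ‖φ u‖ * ‖φ c‖ := by
          gcongr
          exact norm_mul_le _ _
      _ ≤ (M * ‖b‖) * ‖φ u‖ * (M * ‖c‖) := by
          gcongr
          exacts [hbound b, hbound c]
      _ = (‖b‖ * ‖c‖) * M ^ 2 * ‖φ u‖ := by ring
      _ ≤ C * M ^ 2 * ‖φ u‖ := by gcongr
  have hfu : ‖φ u‖ = ‖a‖⁻¹ * ‖φ a‖ := by
    rw [hu, map_smul, norm_smul, norm_inv, RCLike.norm_ofReal, abs_of_pos hna]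
  have key : 1 ≤ C * M ^ 2 * (‖a‖⁻¹ * ‖φ a‖) := by
    rw [← hfu]; linarith
  rw [div_le_iff₀ hCM] at *
  have := mul_le_mul_of_nonneg_left key hna.le
  rw [mul_one] at this
  calc ‖a‖ ≤ ‖a‖ * (C * M ^ 2 * (‖a‖⁻¹ * ‖φ a‖)) := this
    _ = ‖φ a‖ * (C * M ^ 2) * (‖a‖ * ‖a‖⁻¹) := by ring
    _ = ‖φ a‖ * (C * M ^ 2) := by rw [mul_inv_cancel₀ hna.ne', mul_one]
end

section
/- Let Y = (⊕_{n∈ℕ} ℓ₂ⁿ)_{ℓ₁} be the ℓ₁-direct sum of the finite-dimensional Euclidean spaces ℓ₂ⁿ. Then for every constant C > 1 and every bounded linear operator T on Y such that I_Y − T is a compact operator, there exist bounded linear operators U, V on Y with ‖U‖·‖V‖ ≤ C such that U∘T∘V = I_Y. -/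
/-!
Put `K = I - T`. The tail projections `Q_M` (killing the first `M` blocks) are contractions
tending strongly to `0`, so `‖Q_M K‖ → 0` because `K` is compact. Since `ℓ₂ⁿ` sits isometrically
in `ℓ₂ⁿ⁺ᴹ`, the right shift `R_M` (block `n` to block `n + M`, padded with zeros) and the left shift
`L_M` (block `n + M` truncated into block `n`) are contractions with `L_M R_M = I` and
`L_M Q_M = L_M`. Hence `L_M T R_M = I - L_M Q_M K R_M` is within `‖Q_M K‖ < 1` of the identity,
and `U = (L_M T R_M)⁻¹ L_M`, `V = R_M` satisfy `‖U‖ ‖V‖ ≤ (1 - ‖Q_M K‖)⁻¹ ≤ C`.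
-/

open scoped ENNReal

open Filter Topology Metric

section CompactOperator

variable {𝕜 X Y Z ι : Type*} [RCLike 𝕜]
  [NormedAddCommGroup X] [NormedSpace 𝕜 X] [NormedAddCommGroup Y] [NormedSpace 𝕜 Y]
  [NormedAddCommGroup Z] [NormedSpace 𝕜 Z]

theorem IsCompactOperator.tendsto_comp_of_tendsto_apply {A : X →L[𝕜] Y}
    (hA : IsCompactOperator A) {l : Filter ι} {P : ι → Y →L[𝕜] Z} {B : ℝ}
    (hPB : ∀ i, ‖P i‖ ≤ B) (hP : ∀ y, Tendsto (fun i => P i y) l (𝓝 0)) :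
    Tendsto (fun i => P i ∘L A) l (𝓝 0) := by
  suffices key : ∀ ε > 0, ∀ᶠ i in l, ‖P i ∘L A‖ ≤ ε by
    refine Metric.tendsto_nhds.2 fun ε hε => (key (ε / 2) (half_pos hε)).mono fun i hi => ?_
    rw [dist_zero_right]
    linarith
  intro ε hε
  obtain ⟨δ, hδ, hBδ⟩ := exists_pos_mul_lt (half_pos hε) B
  obtain ⟨S, hS, hAS⟩ :=
    IsCompactOperator.image_closedBall_subset_compact (f := A.toLinearMap) hA 1
  obtain ⟨t, -, ht, hSt⟩ := hS.finite_cover_balls hδ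
  have hPt : ∀ᶠ i in l, ∀ c ∈ t, ‖P i c‖ < ε / 2 := ht.eventually_all.2 fun c _ =>
    (hP c).eventually (mem_of_superset (ball_mem_nhds 0 (half_pos hε)) fun _ => mem_ball_zero_iff.1)
  filter_upwards [hPt] with i hi
  refine ContinuousLinearMap.opNorm_le_of_unit_norm hε.le fun x hx => ?_
  obtain ⟨c, hc, hxc⟩ := Set.mem_iUnion₂.1 (hSt (hAS ⟨x, by simp [hx], rfl⟩))
  calc ‖(P i ∘L A) x‖ = ‖P i (A x - c) + P i c‖ := by rw [← map_add, sub_add_cancel]; rfl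
    _ ≤ ‖P i‖ * ‖A x - c‖ + ‖P i c‖ := norm_add_le_of_le ((P i).le_opNorm _) le_rfl
    _ ≤ ‖P i‖ * δ + ε / 2 := by
      gcongr
      · exact (mem_ball_iff_norm.1 hxc).le
      · exact (hi c hc).le
    _ ≤ B * δ + ε / 2 := by gcongr; exact hPB i
    _ ≤ ε := by linarith

end CompactOperator

theorem exists_mul_one_sub_eq_one_norm_le {R : Type*} [NormedRing R] [HasSummableGeomSeries R]
    (hR : ‖(1 : R)‖ ≤ 1) {C : ℝ} (hC : 0 < C) {t : R} (ht : ‖t‖ ≤ 1 - C⁻¹) :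
    ∃ u : R, u * (1 - t) = 1 ∧ ‖u‖ ≤ C := by
  have hCt : C⁻¹ ≤ 1 - ‖t‖ := by linarith
  have ht1 : ‖t‖ < 1 := by linarith [inv_pos.2 hC]
  refine ⟨∑' n, t ^ n, geom_series_mul_neg t ht1, ?_⟩
  calc ‖∑' n, t ^ n‖ ≤ ‖(1 : R)‖ - 1 + (1 - ‖t‖)⁻¹ := tsum_geometric_le_of_norm_lt_one t ht1
    _ ≤ (1 - ‖t‖)⁻¹ := by linarith
    _ ≤ C := inv_le_of_inv_le₀ hC hCt

namespace EuclideanSpace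

variable {𝕜 : Type*} [RCLike 𝕜] {m n k : ℕ}

def resize : EuclideanSpace 𝕜 (Fin m) →ₗ[𝕜] EuclideanSpace 𝕜 (Fin n) where
  toFun v := WithLp.toLp 2 fun j => if hj : (j : ℕ) < m then v ⟨j, hj⟩ else 0
  map_add' u v := by ext j; by_cases hj : (j : ℕ) < m <;> simp [hj]
  map_smul' c v := by ext j; by_cases hj : (j : ℕ) < m <;> simp [hj]

theorem resize_apply (v : EuclideanSpace 𝕜 (Fin m)) (j : Fin n) :
    resize v j = if hj : (j : ℕ) < m then v ⟨j, hj⟩ else 0 := rfl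

theorem norm_resize_le (v : EuclideanSpace 𝕜 (Fin m)) :
    ‖(resize v : EuclideanSpace 𝕜 (Fin n))‖ ≤ ‖v‖ := by
  rcases le_total m n with h | h
  · obtain ⟨k, rfl⟩ := Nat.exists_eq_add_of_le h
    simp [EuclideanSpace.norm_eq, resize_apply, Fin.sum_univ_add]
  · obtain ⟨k, rfl⟩ := Nat.exists_eq_add_of_le h
    have hj (j : Fin n) : (j : ℕ) < n + k := by omega
    simp only [EuclideanSpace.norm_eq, resize_apply, hj, dif_pos, Fin.sum_univ_add]
    gcongr
    exact le_add_of_nonneg_right (by positivity)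

theorem resize_resize (h : m ≤ k) (v : EuclideanSpace 𝕜 (Fin m)) :
    (resize (resize v : EuclideanSpace 𝕜 (Fin k)) : EuclideanSpace 𝕜 (Fin n)) = resize v := by
  ext j
  simp only [resize_apply]
  split_ifs <;> first | rfl | omega

theorem resize_eq_of_eq {x : ∀ k, EuclideanSpace 𝕜 (Fin k)} (h : m = n) :
    resize (x m) = x n := by
  subst h
  ext j
  simp [resize_apply]

end EuclideanSpace

namespace lp

variable {𝕜 : Type*} [RCLike 𝕜] {p : ℝ≥0∞} {ι κ : Type*} {E : ι → Type*} {F : κ → Type*}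
  [∀ i, NormedAddCommGroup (E i)] [∀ i, NormedSpace 𝕜 (E i)]
  [∀ k, NormedAddCommGroup (F k)] [∀ k, NormedSpace 𝕜 (F k)]

theorem sum_norm_rpow_apply_comp_le (hp : 0 < p.toReal) (x : lp E p) {g : κ → ι}
    {A : ∀ k, E (g k) →ₗ[𝕜] F k} (hA : ∀ k v, ‖A k v‖ ≤ ‖v‖)
    (hg : Set.InjOn g {k | A k ≠ 0}) (s : Finset κ) :
    ∑ k ∈ s, ‖A k (x (g k))‖ ^ p.toReal ≤ ‖x‖ ^ p.toReal := by
  classical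
  calc ∑ k ∈ s, ‖A k (x (g k))‖ ^ p.toReal
      = ∑ k ∈ s with A k ≠ 0, ‖A k (x (g k))‖ ^ p.toReal := by
        refine (Finset.sum_filter_of_ne fun k _ hk => ?_).symm
        contrapose! hk
        simp [hk, hp.ne']
    _ ≤ ∑ k ∈ s with A k ≠ 0, ‖x (g k)‖ ^ p.toReal := by gcongr with k; exact hA k _
    _ = ∑ i ∈ (s.filter (A · ≠ 0)).image g, ‖x i‖ ^ p.toReal :=
        (Finset.sum_image (f := fun i => ‖x i‖ ^ p.toReal) fun a ha b hb =>
          hg (Finset.mem_filter.1 ha).2 (Finset.mem_filter.1 hb).2).symm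
    _ ≤ ‖x‖ ^ p.toReal := lp.sum_rpow_le_norm_rpow hp x _

variable [Fact (1 ≤ p)]

noncomputable def blockMap (hp : 0 < p.toReal) (g : κ → ι) (A : ∀ k, E (g k) →ₗ[𝕜] F k)
    (hA : ∀ k v, ‖A k v‖ ≤ ‖v‖) (hg : Set.InjOn g {k | A k ≠ 0}) : lp E p →L[𝕜] lp F p :=
  LinearMap.mkContinuous
    { toFun x := ⟨fun k => A k (x (g k)), memℓp_gen' (sum_norm_rpow_apply_comp_le hp x hA hg)⟩
      map_add' x y := lp.ext <| funext fun k => map_add (A k) (x (g k)) (y (g k))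
      map_smul' c x := lp.ext <| funext fun k => map_smul (A k) c (x (g k)) }
    1 fun x => by
      rw [one_mul]
      exact lp.norm_le_of_forall_sum_le hp (norm_nonneg x) (sum_norm_rpow_apply_comp_le hp x hA hg)

section blockMap

variable (hp : 0 < p.toReal) {g : κ → ι} {A : ∀ k, E (g k) →ₗ[𝕜] F k}
  (hA : ∀ k v, ‖A k v‖ ≤ ‖v‖) (hg : Set.InjOn g {k | A k ≠ 0})

@[simp]
theorem blockMap_apply (x : lp E p) (k : κ) : blockMap hp g A hA hg x k = A k (x (g k)) := rfl

theorem norm_blockMap_le : ‖blockMap hp g A hA hg‖ ≤ 1 :=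
  LinearMap.mkContinuous_norm_le _ zero_le_one _

end blockMap

section tail

variable {E : ℕ → Type*} [∀ n, NormedAddCommGroup (E n)] [∀ n, NormedSpace 𝕜 (E n)]
  (hp : 0 < p.toReal)

noncomputable def tailProj (M : ℕ) : lp E p →L[𝕜] lp E p :=
  blockMap hp id (fun n => if M ≤ n then LinearMap.id else 0)
    (fun n v => by split_ifs <;> simp) Function.injective_id.injOn

theorem tailProj_apply (M : ℕ) (x : lp E p) (n : ℕ) :
    tailProj (𝕜 := 𝕜) hp M x n = if M ≤ n then x n else 0 := by
  simp only [tailProj, blockMap_apply, id]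
  split_ifs <;> simp

theorem tailProj_eq_sub_sum_single (M : ℕ) (x : lp E p) :
    tailProj (𝕜 := 𝕜) hp M x = x - ∑ n ∈ Finset.range M, lp.single p n (x n) := by
  ext n
  simp only [tailProj_apply, lp.coeFn_sub, Pi.sub_apply, lp.coeFn_sum, Finset.sum_apply,
    lp.single_apply]
  by_cases h : M ≤ n
  · simp [h, not_lt.2 h]
  · simp [h, not_le.1 h]

theorem tendsto_tailProj_apply (x : lp E p) :
    Tendsto (fun M => tailProj (𝕜 := 𝕜) hp M x) atTop (𝓝 0) := by
  have hx := (lp.hasSum_single (ENNReal.toReal_pos_iff.1 hp).2.ne x).tendsto_sum_nat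
  simpa [tailProj_eq_sub_sum_single] using (tendsto_const_nhds (x := x)).sub hx

theorem norm_tailProj_le (M : ℕ) : ‖tailProj (𝕜 := 𝕜) (E := E) hp M‖ ≤ 1 := norm_blockMap_le ..

end tail

section euclidean

open EuclideanSpace

variable (hp : 0 < p.toReal) (M : ℕ)

noncomputable def euclideanShiftLeft :
    lp (fun n : ℕ => EuclideanSpace 𝕜 (Fin n)) p →L[𝕜]
      lp (fun n : ℕ => EuclideanSpace 𝕜 (Fin n)) p :=
  blockMap hp (· + M) (fun _ => resize) (fun _ => norm_resize_le)
    (add_left_injective M).injOn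

noncomputable def euclideanShiftRight :
    lp (fun n : ℕ => EuclideanSpace 𝕜 (Fin n)) p →L[𝕜]
      lp (fun n : ℕ => EuclideanSpace 𝕜 (Fin n)) p :=
  blockMap hp (· - M) (fun n => if M ≤ n then resize else 0)
    (fun n v => by split_ifs <;> simp [norm_resize_le])
    (fun a ha b hb hab => by
      have ha' : M ≤ a := by_contra fun h => ha (if_neg h)
      have hb' : M ≤ b := by_contra fun h => hb (if_neg h)
      simp only at hab
      omega)

theorem euclideanShiftLeft_apply (x : lp (fun n : ℕ => EuclideanSpace 𝕜 (Fin n)) p) (n : ℕ) :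
    euclideanShiftLeft hp M x n = resize (x (n + M)) := rfl

theorem euclideanShiftRight_apply (x : lp (fun n : ℕ => EuclideanSpace 𝕜 (Fin n)) p) (n : ℕ) :
    euclideanShiftRight hp M x n = (if M ≤ n then resize else 0) (x (n - M)) := rfl

theorem norm_euclideanShiftLeft_le : ‖euclideanShiftLeft (𝕜 := 𝕜) hp M‖ ≤ 1 :=
  norm_blockMap_le ..

theorem norm_euclideanShiftRight_le : ‖euclideanShiftRight (𝕜 := 𝕜) hp M‖ ≤ 1 :=
  norm_blockMap_le ..

theorem euclideanShiftLeft_mul_euclideanShiftRight :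
    euclideanShiftLeft (𝕜 := 𝕜) hp M * euclideanShiftRight hp M = 1 := by
  refine ContinuousLinearMap.ext fun x => lp.ext <| funext fun n => ?_
  rw [mul_apply_eq_comp, euclideanShiftLeft_apply, euclideanShiftRight_apply,
    if_pos (Nat.le_add_left M n), one_apply_eq_self, resize_resize (by omega),
    resize_eq_of_eq (Nat.add_sub_cancel n M)]

theorem euclideanShiftLeft_mul_tailProj :
    euclideanShiftLeft (𝕜 := 𝕜) hp M * tailProj hp M = euclideanShiftLeft hp M := by
  refine ContinuousLinearMap.ext fun x => lp.ext <| funext fun n => ?_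
  simp [euclideanShiftLeft_apply, tailProj_apply]

end euclidean

end lp

/-- Let `Y = (⊕_{n∈ℕ} ℓ₂ⁿ)_{ℓ₁}`. For every `C > 1` and every bounded
operator `T` on `Y` such that `I_Y − T` is compact, there are bounded operators `U, V` on
`Y` with `‖U‖·‖V‖ ≤ C` such that `U ∘ T ∘ V = I_Y`. -/
theorem statement8 {𝕜 : Type*} [RCLike 𝕜] (C : ℝ) (hC : 1 < C)
    (T : lp (fun n : ℕ => EuclideanSpace 𝕜 (Fin n)) 1 →L[𝕜]
         lp (fun n : ℕ => EuclideanSpace 𝕜 (Fin n)) 1)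
    (hT : IsCompactOperator
      ⇑(ContinuousLinearMap.id 𝕜 (lp (fun n : ℕ => EuclideanSpace 𝕜 (Fin n)) 1) - T)) :
    ∃ U V : lp (fun n : ℕ => EuclideanSpace 𝕜 (Fin n)) 1 →L[𝕜]
            lp (fun n : ℕ => EuclideanSpace 𝕜 (Fin n)) 1,
      ‖U‖ * ‖V‖ ≤ C ∧
        U ∘L T ∘L V = ContinuousLinearMap.id 𝕜 (lp (fun n : ℕ => EuclideanSpace 𝕜 (Fin n)) 1) := by
  have hp : 0 < (1 : ℝ≥0∞).toReal := by simp
  set K := ContinuousLinearMap.id 𝕜 _ - T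
  obtain ⟨M, hM⟩ : ∃ M, ‖lp.tailProj hp M * K‖ ≤ 1 - C⁻¹ :=
    ((tendsto_zero_iff_norm_tendsto_zero.1 <| hT.tendsto_comp_of_tendsto_apply
      (lp.norm_tailProj_le hp) (lp.tendsto_tailProj_apply hp)).eventually
        (ge_mem_nhds (by simpa using inv_lt_one_of_one_lt₀ hC))).exists
  set L := lp.euclideanShiftLeft (𝕜 := 𝕜) hp M
  set R := lp.euclideanShiftRight (𝕜 := 𝕜) hp M
  have hL : ‖L‖ ≤ 1 := lp.norm_euclideanShiftLeft_le hp M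
  have hR : ‖R‖ ≤ 1 := lp.norm_euclideanShiftRight_le hp M
  set t := L * K * R
  have ht : ‖t‖ ≤ 1 - C⁻¹ :=
    calc ‖t‖ = ‖L * (lp.tailProj hp M * K) * R‖ := by
          rw [← mul_assoc L, lp.euclideanShiftLeft_mul_tailProj]
      _ ≤ ‖L‖ * ‖lp.tailProj hp M * K‖ * ‖R‖ := norm_mul₃_le
      _ ≤ 1 * ‖lp.tailProj hp M * K‖ * 1 := by gcongr
      _ ≤ 1 - C⁻¹ := by simpa using hM
  have hLTR : L * T * R = 1 - t := by
    rw [show T = 1 - K from (sub_sub_cancel _ T).symm, mul_sub, mul_one, sub_mul,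
      lp.euclideanShiftLeft_mul_euclideanShiftRight]
  obtain ⟨u, hu, hu_norm⟩ := exists_mul_one_sub_eq_one_norm_le
    ContinuousLinearMap.norm_id_le (zero_lt_one.trans hC) ht
  refine ⟨u * L, R, ?_, ?_⟩
  · calc ‖u * L‖ * ‖R‖ ≤ ‖u‖ * ‖L‖ * ‖R‖ := by gcongr; exact norm_mul_le u L
      _ ≤ C * 1 * 1 := by gcongr
      _ = C := by ring
  · change u * L * (T * R) = 1
    rw [mul_assoc, ← mul_assoc L, hLTR, hu]
end

section
/- Let Γ be an infinite set, let X be a Banach space, and let T : c₀(Γ) → X be a bounded linear operator such that δ := inf_{γ∈Γ} ‖T e_γ‖ > 0. Then for every η ∈ (0, δ) there is a subset Γ' of Γ of the same cardinality as Γ such that ‖T x‖ ≥ η·‖x‖ for every x in the closed linear span of {e_γ : γ ∈ Γ'}. -/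
open scoped ENNReal ZeroAtInfty
open Filter

/-- The standard unit vector `e_γ` of `c₀(Γ) = C₀(Γ, 𝕜)` for a discrete space `Γ`. -/
noncomputable def stdUnitVector (𝕜 : Type*) [RCLike 𝕜] {Γ : Type*} [TopologicalSpace Γ]
    [DiscreteTopology Γ] (γ : Γ) : C₀(Γ, 𝕜) :=
  { toFun := ({γ} : Set Γ).indicator fun _ => 1
    continuous_toFun := continuous_of_discreteTopology
    zero_at_infty' := by
      have h : ({γ} : Set Γ).indicator (fun _ => (1 : 𝕜)) =ᶠ[Filter.cocompact Γ]
          fun _ => (0 : 𝕜) := by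
        rw [Filter.cocompact_eq_cofinite]
        filter_upwards [(Set.finite_singleton γ).eventually_cofinite_notMem] with m hm
        exact Set.indicator_of_notMem hm _
      exact Filter.Tendsto.congr' h.symm tendsto_const_nhds }

/-!
Choose norming functionals `f γ = g γ ∘ T` with `f γ (e γ) = ‖T e γ‖ ≥ δ` and `‖f γ‖ ≤ ‖T‖`.
As the dual of `c₀(Γ)` is `ℓ¹(Γ)`, every row `(f γ (e γ'))_γ'` has `ℓ¹`-norm at most `‖T‖`.
A Rosenthal-type extraction then finds `Γ'` with `#Γ' = #Γ` on which every off-diagonal row sum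
is at most `δ - η`. For `x = ∑ c γ • e γ` supported in `Γ'`, testing against `f γ₀` at a
coordinate `γ₀` of maximal modulus gives `‖T x‖ ≥ ‖f γ₀ x‖ ≥ (δ - (δ - η)) ‖c γ₀‖ = η ‖x‖`,
and the inequality passes to the closure.
-/

open scoped Cardinal
open Set Function

theorem Set.Infinite.exists_pairwiseDisjoint_mk_eq {α : Type*} {B : Set α} (hB : B.Infinite) :
    ∃ D : B → Set α, (∀ j, D j ⊆ B) ∧ (∀ j, #(D j) = #B) ∧ Pairwise (Disjoint on D) := by
  have : Infinite B := hB.to_subtype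
  obtain ⟨e⟩ : Nonempty (B × B ≃ B) := by
    rw [← Cardinal.eq, Cardinal.mk_prod, Cardinal.lift_id,
      Cardinal.mul_eq_self (Cardinal.aleph0_le_mk B)]
  refine ⟨fun j => range fun i => (e (j, i) : α), ?_, fun j => ?_, fun j j' hne => ?_⟩
  · rintro j _ ⟨i, rfl⟩
    exact (e (j, i)).2
  · exact Cardinal.mk_range_eq _ fun i i' h =>
      (Prod.ext_iff.1 (e.injective (Subtype.val_injective h))).2
  · rw [Function.onFun, Set.disjoint_left]
    rintro _ ⟨i, rfl⟩ ⟨i', h⟩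
    exact hne (congrArg Prod.fst (e.injective (Subtype.val_injective h))).symm

/- Split `B` into `#B` disjoint blocks of size `#B`. Either the row sums inside some block are
all at most `ε`, or every block has a point whose row sum inside its block exceeds `ε`; these
points form a set of size `#B` on which the row sums are at most `k * ε`. -/
theorem exists_subset_mk_eq_forall_tsum_le {α : Type*} (a : α → α → ℝ≥0∞) {ε : ℝ≥0∞}
    (hε : ε ≠ ∞) (k : ℕ) {B : Set α} (hB : B.Infinite)
    (h : ∀ x ∈ B, ∑' y : ↥(B \ {x}), a x y ≤ k * ε) :
    ∃ C ⊆ B, #C = #B ∧ ∀ x ∈ C, ∑' y : ↥(C \ {x}), a x y ≤ ε := by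
  induction k generalizing B with
  | zero => exact ⟨B, subset_rfl, rfl, fun x hx => (h x hx).trans (by simp)⟩
  | succ k ih =>
    obtain ⟨D, hDB, hD, hdisj⟩ := hB.exists_pairwiseDisjoint_mk_eq
    by_cases hgood : ∃ j, ∀ x ∈ D j, ∑' y : ↥(D j \ {x}), a x y ≤ ε
    · obtain ⟨j, hj⟩ := hgood
      exact ⟨D j, hDB j, hD j, hj⟩
    push Not at hgood
    choose n hnD hn using hgood
    have hn_inj : Function.Injective n := fun j j' h =>
      hdisj.eq (Set.not_disjoint_iff.2 ⟨n j, hnD j, h ▸ hnD j'⟩)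
    have hnB : #(range n) = #B := Cardinal.mk_range_eq n hn_inj
    have hn_inf : (range n).Infinite :=
      infinite_coe_iff.1 (Cardinal.infinite_iff.2 (hnB ▸ Cardinal.infinite_iff.1 hB.to_subtype))
    suffices hrow : ∀ x ∈ range n, ∑' y : ↥(range n \ {x}), a x y ≤ k * ε by
      obtain ⟨C, hCn, hC, hCsum⟩ := ih hn_inf hrow
      exact ⟨C, hCn.trans (range_subset_iff.2 fun j => hDB j (hnD j)), hC.trans hnB, hCsum⟩
    rintro _ ⟨j, rfl⟩
    have hblock : Disjoint (range n \ {n j}) (D j \ {n j}) := by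
      rw [Set.disjoint_left]
      rintro _ ⟨⟨j', rfl⟩, hj'⟩ ⟨hj'D, -⟩
      obtain rfl : j' = j := hdisj.eq (Set.not_disjoint_iff.2 ⟨n j', hnD j', hj'D⟩)
      exact hj' rfl
    have hsub : (range n \ {n j}) ∪ (D j \ {n j}) ⊆ B \ {n j} :=
      union_subset (sdiff_subset_sdiff_left (range_subset_iff.2 fun j => hDB j (hnD j)))
        (sdiff_subset_sdiff_left (hDB j))
    refine ENNReal.le_of_add_le_add_right hε ?_
    calc ∑' y : ↥(range n \ {n j}), a (n j) y + ε
        ≤ ∑' y : ↥(range n \ {n j}), a (n j) y + ∑' y : ↥(D j \ {n j}), a (n j) y := by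
          gcongr
          exact (hn j).le
      _ = ∑' y : ↥((range n \ {n j}) ∪ (D j \ {n j})), a (n j) y :=
          (ENNReal.summable.tsum_union_disjoint hblock ENNReal.summable).symm
      _ ≤ ∑' y : ↥(B \ {n j}), a (n j) y := ENNReal.tsum_mono_subtype _ hsub
      _ ≤ (k + 1 : ℕ) * ε := h _ (hDB j (hnD j))
      _ = k * ε + ε := by push_cast; ring

theorem mul_norm_le_norm_sum_smul_of_diag_dominant {ι 𝕜 E : Type*} [NormedField 𝕜]
    [SeminormedAddCommGroup E] [NormedSpace 𝕜 E] [DecidableEq ι] {F : Finset ι} {c : ι → 𝕜}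
    {w : ι → E} {i₀ : ι} (hi₀ : i₀ ∈ F) (hmax : ∀ i ∈ F, ‖c i‖ ≤ ‖c i₀‖) {δ η : ℝ} (hdiag : δ ≤ ‖w i₀‖)
    (hoff : ∑ i ∈ F.erase i₀, ‖w i‖ ≤ δ - η) :
    η * ‖c i₀‖ ≤ ‖∑ i ∈ F, c i • w i‖ := by
  have hrest : ‖∑ i ∈ F.erase i₀, c i • w i‖ ≤ ‖c i₀‖ * (δ - η) :=
    calc ‖∑ i ∈ F.erase i₀, c i • w i‖
        ≤ ∑ i ∈ F.erase i₀, ‖c i₀‖ * ‖w i‖ := norm_sum_le_of_le _ fun i hi => by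
          rw [norm_smul]
          exact mul_le_mul_of_nonneg_right (hmax i (Finset.mem_of_mem_erase hi)) (norm_nonneg _)
      _ = ‖c i₀‖ * ∑ i ∈ F.erase i₀, ‖w i‖ := (Finset.mul_sum _ _ _).symm
      _ ≤ ‖c i₀‖ * (δ - η) := mul_le_mul_of_nonneg_left hoff (norm_nonneg _)
  have hlead : ‖c i₀‖ * δ ≤ ‖c i₀ • w i₀‖ := by
    rw [norm_smul]
    exact mul_le_mul_of_nonneg_left hdiag (norm_nonneg _)
  rw [← Finset.add_sum_erase F _ hi₀]
  linarith [norm_sub_le_norm_add (c i₀ • w i₀) (∑ i ∈ F.erase i₀, c i • w i)]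

section StdUnitVector

variable {𝕜 : Type*} [RCLike 𝕜] {Γ : Type*} [TopologicalSpace Γ] [DiscreteTopology Γ]

theorem stdUnitVector_apply [DecidableEq Γ] (γ β : Γ) :
    stdUnitVector 𝕜 γ β = if β = γ then 1 else 0 := by
  simp [stdUnitVector, Pi.single_apply]

theorem sum_smul_stdUnitVector_apply [DecidableEq Γ] (F : Finset Γ) (c : Γ → 𝕜) (β : Γ) :
    (∑ γ ∈ F, c γ • stdUnitVector 𝕜 γ) β = if β ∈ F then c β else 0 := by
  rw [show (∑ γ ∈ F, c γ • stdUnitVector 𝕜 γ) β = ∑ γ ∈ F, (c γ • stdUnitVector 𝕜 γ) β from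
    map_sum (AddMonoidHom.mk' (fun f : C₀(Γ, 𝕜) => f β) fun _ _ => rfl) _ _]
  simp [stdUnitVector_apply]

theorem norm_sum_smul_stdUnitVector_le {F : Finset Γ} {c : Γ → 𝕜} {M : ℝ} (hM : 0 ≤ M)
    (hc : ∀ γ ∈ F, ‖c γ‖ ≤ M) : ‖∑ γ ∈ F, c γ • stdUnitVector 𝕜 γ‖ ≤ M := by
  rw [← ZeroAtInftyContinuousMap.norm_toBCF_eq_norm, BoundedContinuousFunction.norm_le hM]
  intro β
  change ‖(∑ γ ∈ F, c γ • stdUnitVector 𝕜 γ) β‖ ≤ M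
  classical
  rw [sum_smul_stdUnitVector_apply]
  split_ifs with hβ
  exacts [hc β hβ, by simpa using hM]

theorem sum_norm_apply_stdUnitVector_le (g : StrongDual 𝕜 C₀(Γ, 𝕜)) (F : Finset Γ) :
    ∑ γ ∈ F, ‖g (stdUnitVector 𝕜 γ)‖ ≤ ‖g‖ := by
  set u : Γ → 𝕜 := fun γ => g (stdUnitVector 𝕜 γ)
  -- `c γ` has modulus `1`, or is `0` (junk division) when `u γ = 0`
  set c : Γ → 𝕜 := fun γ => (‖u γ‖ : 𝕜) / u γ
  have hc : ∀ γ ∈ F, ‖c γ‖ ≤ 1 := fun γ _ => by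
    simpa [c, norm_div] using div_self_le_one ‖u γ‖
  have hcu : ∀ γ, c γ * u γ = ‖u γ‖ := fun γ => by
    by_cases hu : u γ = 0
    · simp [c, hu]
    · exact div_mul_cancel₀ _ hu
  calc ∑ γ ∈ F, ‖u γ‖ = ‖g (∑ γ ∈ F, c γ • stdUnitVector 𝕜 γ)‖ := by
        simp only [map_sum, map_smul, smul_eq_mul]
        change _ = ‖∑ γ ∈ F, c γ * u γ‖
        rw [Finset.sum_congr rfl fun γ _ => hcu γ, ← RCLike.ofReal_sum, RCLike.norm_ofReal,
          abs_of_nonneg (Finset.sum_nonneg fun _ _ => norm_nonneg _)]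
    _ ≤ ‖g‖ * ‖∑ γ ∈ F, c γ • stdUnitVector 𝕜 γ‖ := g.le_opNorm _
    _ ≤ ‖g‖ * 1 := by gcongr; exact norm_sum_smul_stdUnitVector_le zero_le_one hc
    _ = ‖g‖ := mul_one _

theorem exists_subset_mk_eq_offDiag_sum_le [Infinite Γ] (f : Γ → StrongDual 𝕜 C₀(Γ, 𝕜))
    {M ε : ℝ} (hf : ∀ γ, ‖f γ‖ ≤ M) (hε : 0 < ε) :
    ∃ C : Set Γ, #C = #Γ ∧ ∀ γ ∈ C, ∀ F : Finset Γ, ↑F ⊆ C \ {γ} →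
      ∑ γ' ∈ F, ‖f γ (stdUnitVector 𝕜 γ')‖ ≤ ε := by
  obtain ⟨k, hk⟩ := exists_nat_ge (M / ε)
  have hrow : ∀ γ ∈ (Set.univ : Set Γ), ∑' γ' : ↥(Set.univ \ {γ}),
      ENNReal.ofReal ‖f γ (stdUnitVector 𝕜 γ')‖ ≤ k * ENNReal.ofReal ε := fun γ _ =>
    calc ∑' γ' : ↥(Set.univ \ {γ}), ENNReal.ofReal ‖f γ (stdUnitVector 𝕜 γ')‖
        ≤ ∑' γ', ENNReal.ofReal ‖f γ (stdUnitVector 𝕜 γ')‖ :=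
          ENNReal.tsum_comp_le_tsum_of_injective Subtype.val_injective _
      _ ≤ ENNReal.ofReal ‖f γ‖ := by
          refine tsum_le_of_sum_le' zero_le fun F => ?_
          rw [← ENNReal.ofReal_sum_of_nonneg fun _ _ => norm_nonneg _]
          exact ENNReal.ofReal_le_ofReal (sum_norm_apply_stdUnitVector_le (f γ) F)
      _ ≤ ENNReal.ofReal (k * ε) :=
          ENNReal.ofReal_le_ofReal ((hf γ).trans ((div_le_iff₀ hε).1 hk))
      _ = k * ENNReal.ofReal ε := by
          rw [ENNReal.ofReal_mul (Nat.cast_nonneg k), ENNReal.ofReal_natCast]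
  obtain ⟨C, -, hC, hCsum⟩ :=
    exists_subset_mk_eq_forall_tsum_le (fun γ γ' => ENNReal.ofReal ‖f γ (stdUnitVector 𝕜 γ')‖)
      ENNReal.ofReal_ne_top k infinite_univ hrow
  refine ⟨C, hC.trans Cardinal.mk_univ, fun γ hγ F hF => ?_⟩
  rw [← ENNReal.ofReal_le_ofReal_iff hε.le, ENNReal.ofReal_sum_of_nonneg fun _ _ => norm_nonneg _,
    ← Finset.tsum_subtype']
  exact (ENNReal.tsum_mono_subtype (fun γ' => ENNReal.ofReal ‖f γ (stdUnitVector 𝕜 γ')‖) hF).trans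
    (hCsum γ hγ)

theorem mul_norm_le_norm_of_mem_span_stdUnitVector {X : Type*} [NormedAddCommGroup X] [NormedSpace 𝕜 X]
    (T : C₀(Γ, 𝕜) →L[𝕜] X) (f : Γ → StrongDual 𝕜 C₀(Γ, 𝕜)) (hfT : ∀ γ x, ‖f γ x‖ ≤ ‖T x‖)
    {C : Set Γ} {δ η : ℝ} (hη : 0 ≤ η) (hdiag : ∀ γ ∈ C, δ ≤ ‖f γ (stdUnitVector 𝕜 γ)‖)
    (hoff : ∀ γ ∈ C, ∀ F : Finset Γ, ↑F ⊆ C \ {γ} →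
      ∑ γ' ∈ F, ‖f γ (stdUnitVector 𝕜 γ')‖ ≤ δ - η)
    {y : C₀(Γ, 𝕜)} (hy : y ∈ Submodule.span 𝕜 (stdUnitVector 𝕜 '' C)) :
    η * ‖y‖ ≤ ‖T y‖ := by
  classical
  obtain ⟨l, hlC, rfl⟩ := (Finsupp.mem_span_image_iff_linearCombination 𝕜).1 hy
  rw [Finsupp.linearCombination_apply, Finsupp.sum]
  rcases l.support.eq_empty_or_nonempty with hl | hl
  · simp [hl]
  obtain ⟨γ₀, hγ₀, hmax⟩ := l.support.exists_max_image (fun γ => ‖l γ‖) hl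
  have hγ₀C : γ₀ ∈ C := hlC hγ₀
  have hsupp : ↑(l.support.erase γ₀) ⊆ C \ {γ₀} := by
    rw [Finset.coe_erase]
    exact sdiff_subset_sdiff_left hlC
  calc η * ‖∑ γ ∈ l.support, l γ • stdUnitVector 𝕜 γ‖ ≤ η * ‖l γ₀‖ := by
        gcongr
        exact norm_sum_smul_stdUnitVector_le (norm_nonneg _) hmax
    _ ≤ ‖∑ γ ∈ l.support, l γ • f γ₀ (stdUnitVector 𝕜 γ)‖ :=
        mul_norm_le_norm_sum_smul_of_diag_dominant hγ₀ hmax (hdiag γ₀ hγ₀C)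
          (hoff γ₀ hγ₀C _ hsupp)
    _ = ‖f γ₀ (∑ γ ∈ l.support, l γ • stdUnitVector 𝕜 γ)‖ := by simp only [map_sum, map_smul]
    _ ≤ ‖T (∑ γ ∈ l.support, l γ • stdUnitVector 𝕜 γ)‖ := hfT _ _

end StdUnitVector

theorem statement11_general {𝕜 : Type*} [RCLike 𝕜] {Γ : Type*} [TopologicalSpace Γ]
    [DiscreteTopology Γ] [Infinite Γ]
    {X : Type*} [NormedAddCommGroup X] [NormedSpace 𝕜 X]
    (T : C₀(Γ, 𝕜) →L[𝕜] X) :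
    ∀ η : ℝ, 0 < η → η < ⨅ γ : Γ, ‖T (stdUnitVector 𝕜 γ)‖ →
      ∃ Γ' : Set Γ, Cardinal.mk Γ' = Cardinal.mk Γ ∧
        ∀ x ∈ (Submodule.span 𝕜
            ((fun γ : Γ => stdUnitVector 𝕜 γ) '' Γ')).topologicalClosure,
          η * ‖x‖ ≤ ‖T x‖ := by
  intro η hη hηδ
  set δ := ⨅ γ : Γ, ‖T (stdUnitVector 𝕜 γ)‖
  choose g hg hgT using fun γ => exists_dual_vector'' 𝕜 (T (stdUnitVector 𝕜 γ))
  set f : Γ → StrongDual 𝕜 C₀(Γ, 𝕜) := fun γ => (g γ).comp T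
  have hfT : ∀ γ x, ‖f γ x‖ ≤ ‖T x‖ := fun γ x =>
    ((g γ).le_opNorm _).trans (mul_le_of_le_one_left (norm_nonneg _) (hg γ))
  have hf : ∀ γ, ‖f γ‖ ≤ ‖T‖ := fun γ =>
    (f γ).opNorm_le_bound (norm_nonneg T) fun x => (hfT γ x).trans (T.le_opNorm x)
  have hdiag : ∀ γ, δ ≤ ‖f γ (stdUnitVector 𝕜 γ)‖ := fun γ => by
    simpa [f, hgT] using ciInf_le ⟨0, by rintro _ ⟨γ, rfl⟩; positivity⟩ γ
  obtain ⟨C, hC, hoff⟩ := exists_subset_mk_eq_offDiag_sum_le f hf (sub_pos.2 hηδ)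
  refine ⟨C, hC, fun x hx => ?_⟩
  have hclosed : IsClosed {y : C₀(Γ, 𝕜) | η * ‖y‖ ≤ ‖T y‖} :=
    isClosed_le (by fun_prop) (by fun_prop)
  rw [← SetLike.mem_coe, Submodule.topologicalClosure_coe] at hx
  refine hclosed.closure_subset_iff.2 (fun y hy => ?_) hx
  exact mul_norm_le_norm_of_mem_span_stdUnitVector T f hfT hη.le (fun γ _ => hdiag γ) hoff hy

/-- Rosenthal. Let `Γ` be an infinite set, `X` a Banach space and
`T : c₀(Γ) → X` a bounded operator with `δ := inf_γ ‖T e_γ‖ > 0`. Then for every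
`η ∈ (0, δ)` there is a subset `Γ'` of `Γ` of the same cardinality as `Γ` such that
`‖T x‖ ≥ η·‖x‖` for every `x` in the closed linear span of `{e_γ : γ ∈ Γ'}`. -/
theorem statement11 {𝕜 : Type*} [RCLike 𝕜] {Γ : Type*} [TopologicalSpace Γ]
    [DiscreteTopology Γ] [Infinite Γ]
    {X : Type*} [NormedAddCommGroup X] [NormedSpace 𝕜 X] [CompleteSpace X]
    (T : C₀(Γ, 𝕜) →L[𝕜] X)
    (hδ : 0 < ⨅ γ : Γ, ‖T (stdUnitVector 𝕜 γ)‖) :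
    ∀ η : ℝ, 0 < η → η < ⨅ γ : Γ, ‖T (stdUnitVector 𝕜 γ)‖ →
      ∃ Γ' : Set Γ, Cardinal.mk Γ' = Cardinal.mk Γ ∧
        ∀ x ∈ (Submodule.span 𝕜
            ((fun γ : Γ => stdUnitVector 𝕜 γ) '' Γ')).topologicalClosure,
          η * ‖x‖ ≤ ‖T x‖ :=
  statement11_general T
end

section
/- Let Y be a Banach space whose dual unit ball is weak* sequentially compact, and let Z be a closed subspace of Y which contains a closed subspace isomorphic to c₀ (i.e., linearly homeomorphic to c₀). Then for every C > 1 there is a bounded linear operator P on Y with P∘P = P and ‖P‖ ≤ C such that the range of P is contained in Z and is C-isomorphic to c₀. -/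
/-!
The range of the projection is spanned by a sequence `vₖ` that is dominated by the unit vector
basis of `c₀` and admits weak* null biorthogonal functionals `φₖ`: then `P y = ∑ φₖ(y) vₖ` is a
projection, and `‖P‖` and the distortion of `range P ≅ c₀` are at most `θ K`, where `θ` bounds the
`c₀`-sums of the `vₖ` and `K` bounds the `‖φₖ‖`.

To get `θ K ≤ C`, run James's distortion argument in the copy of `c₀`: after passing to a tail,
the best constant `τ` in `‖∑ aₙ xₙ‖ ≤ τ max |aₙ|` is almost attained by disjoint blocks `uₖ`
arbitrarily far out, say `‖uₖ‖ ≥ η τ`. Flipping signs shows `‖∑ aₖ uₖ‖ ≥ (2η - 1) τ |aⱼ|`, so by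
Hahn–Banach the `uₖ` have biorthogonal functionals of norm at most `((2η - 1) τ)⁻¹`. Weak*
sequential compactness gives a subsequence along which these functionals converge pointwise, and
the normalized differences of consecutive pairs, with the vectors `vₖ = u_{ρ(2k)} - u_{ρ(2k+1)}`,
are weak* null and biorthogonal, with `θ K ≤ τ / ((2η - 1) τ) = C` for a suitable `η < 1`.
-/

open scoped ZeroAtInfty
open Filter Topology Function

namespace ZeroAtInftyContinuousMap

variable {α β : Type*} [TopologicalSpace α] [SeminormedAddCommGroup β]

theorem norm_apply_le (f : C₀(α, β)) (x : α) : ‖f x‖ ≤ ‖f‖ :=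
  norm_toBCF_eq_norm (f := f) ▸ f.toBCF.norm_coe_le_norm x

theorem norm_le_of_forall_le {f : C₀(α, β)} {M : ℝ} (hM : 0 ≤ M) (h : ∀ x, ‖f x‖ ≤ M) :
    ‖f‖ ≤ M :=
  norm_toBCF_eq_norm (f := f) ▸ (BoundedContinuousFunction.norm_le hM).2 h

end ZeroAtInftyContinuousMap

section

variable {𝕜 : Type*} [RCLike 𝕜] {E F : Type*} [NormedAddCommGroup E] [NormedSpace 𝕜 E]
  [NormedAddCommGroup F] [NormedSpace 𝕜 F]

def c₀Single (n : ℕ) : C₀(ℕ, 𝕜) :=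
  ⟨⟨fun k => if k = n then 1 else 0, continuous_of_discreteTopology⟩, by
    rw [cocompact_eq_atTop]
    exact tendsto_const_nhds.congr' <| (eventually_gt_atTop n).mono fun k hk => by
      simp [hk.ne']⟩

@[simp] theorem c₀Single_apply (n k : ℕ) : c₀Single (𝕜 := 𝕜) n k = if k = n then 1 else 0 := rfl

variable (𝕜) in
def HasUpperC₀Estimate (x : ℕ → E) (τ : ℝ) : Prop :=
  ∀ (G : Finset ℕ) (a : ℕ → 𝕜), (∀ n ∈ G, ‖a n‖ ≤ 1) → ‖∑ n ∈ G, a n • x n‖ ≤ τ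

theorem hasUpperC₀Estimate_c₀Single : HasUpperC₀Estimate 𝕜 (c₀Single (𝕜 := 𝕜)) 1 := by
  intro G a ha
  refine ZeroAtInftyContinuousMap.norm_le_of_forall_le zero_le_one fun k => ?_
  let eval : C₀(ℕ, 𝕜) →+ 𝕜 := ⟨⟨fun f => f k, rfl⟩, fun _ _ => rfl⟩
  have hsum_apply : (∑ n ∈ G, a n • c₀Single n) k = ∑ n ∈ G, (a n • c₀Single n) k :=
    map_sum eval _ G
  rw [hsum_apply]
  by_cases hk : k ∈ G <;> simp [hk, ha k]

theorem exists_pos_le_norm_symm_c₀Single (e : E ≃L[𝕜] C₀(ℕ, 𝕜)) :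
    ∃ A, 0 < A ∧ ∀ n, A ≤ ‖e.symm (c₀Single n)‖ := by
  refine ⟨(‖(e : E →L[𝕜] C₀(ℕ, 𝕜))‖ + 1)⁻¹, by positivity, fun n => ?_⟩
  rw [inv_le_iff_one_le_mul₀' (by positivity)]
  calc 1 ≤ ‖c₀Single (𝕜 := 𝕜) n‖ := by simpa using (c₀Single (𝕜 := 𝕜) n).norm_apply_le n
    _ = ‖(e : E →L[𝕜] C₀(ℕ, 𝕜)) (e.symm (c₀Single n))‖ := by simp
    _ ≤ ‖(e : E →L[𝕜] C₀(ℕ, 𝕜))‖ * ‖e.symm (c₀Single n)‖ := ContinuousLinearMap.le_opNorm _ _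
    _ ≤ _ := by gcongr; linarith

namespace HasUpperC₀Estimate

variable {x : ℕ → E} {τ : ℝ}

theorem nonneg (hx : HasUpperC₀Estimate 𝕜 x τ) : 0 ≤ τ := by
  simpa using hx ∅ 0 (by simp)

theorem norm_sum_smul_le (hx : HasUpperC₀Estimate 𝕜 x τ) {G : Finset ℕ} {a : ℕ → 𝕜} {M : ℝ}
    (hM : 0 ≤ M) (ha : ∀ n ∈ G, ‖a n‖ ≤ M) : ‖∑ n ∈ G, a n • x n‖ ≤ τ * M := by
  rcases hM.eq_or_lt with rfl | hM
  · have : ∀ n ∈ G, a n • x n = 0 := fun n hn => by simp [norm_le_zero_iff.1 (ha n hn)]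
    simp [Finset.sum_eq_zero this]
  have hM' : (M : 𝕜) ≠ 0 := by exact_mod_cast hM.ne'
  have hnorm : ‖(M : 𝕜)‖ = M := by rw [RCLike.norm_ofReal, abs_of_pos hM]
  have hsum : ∑ n ∈ G, a n • x n = (M : 𝕜) • ∑ n ∈ G, ((M : 𝕜)⁻¹ * a n) • x n := by
    simp [Finset.smul_sum, smul_smul, mul_inv_cancel_left₀ hM']
  have hbound := hx G (fun n => (M : 𝕜)⁻¹ * a n) fun n hn => by
    rw [norm_mul, norm_inv, hnorm]
    exact inv_mul_le_one_of_le₀ (ha n hn) hM.le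
  rw [hsum, norm_smul, hnorm, mul_comm]
  exact mul_le_mul_of_nonneg_right hbound hM.le

theorem map (hx : HasUpperC₀Estimate 𝕜 x τ) (L : E →L[𝕜] F) :
    HasUpperC₀Estimate 𝕜 (fun n => L (x n)) (‖L‖ * τ) := fun G a ha => by
  simpa [map_sum, map_smul] using L.le_opNorm_of_le (hx G a ha)

theorem sum_blocks (hx : HasUpperC₀Estimate 𝕜 x τ) {H : ℕ → Finset ℕ}
    (hH : Pairwise (Disjoint on H)) {c : ℕ → ℕ → 𝕜} (hc : ∀ k, ∀ n ∈ H k, ‖c k n‖ ≤ 1) :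
    HasUpperC₀Estimate 𝕜 (fun k => ∑ n ∈ H k, c k n • x n) τ := by
  classical
  intro G a ha
  set d : ℕ → 𝕜 := fun n => ∑ k ∈ G, if n ∈ H k then a k * c k n else 0
  have hd : ∀ k ∈ G, ∀ n ∈ H k, d n = a k * c k n := fun k hk n hn => by
    simp only [d]
    rw [Finset.sum_eq_single_of_mem k hk fun i _ hik =>
      if_neg fun hni => Finset.disjoint_left.1 (hH hik) hni hn, if_pos hn]
  have hsum : ∑ k ∈ G, a k • ∑ n ∈ H k, c k n • x n = ∑ n ∈ G.biUnion H, d n • x n := by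
    rw [Finset.sum_biUnion (hH.set_pairwise _)]
    refine Finset.sum_congr rfl fun k hk => ?_
    rw [Finset.smul_sum]
    exact Finset.sum_congr rfl fun n hn => by rw [hd k hk n hn, mul_smul]
  rw [hsum]
  refine hx _ _ fun n hn => ?_
  obtain ⟨k, hk, hnk⟩ := Finset.mem_biUnion.1 hn
  rw [hd k hk n hnk, norm_mul]
  exact mul_le_one₀ (ha k hk) (norm_nonneg _) (hc k n hnk)

theorem comp_injective (hx : HasUpperC₀Estimate 𝕜 x τ) {σ : ℕ → ℕ} (hσ : Injective σ) :
    HasUpperC₀Estimate 𝕜 (fun n => x (σ n)) τ := by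
  simpa using hx.sum_blocks (H := fun k => {σ k}) (c := fun _ _ => 1)
    (fun i j hij => Finset.disjoint_singleton.2 (hσ.ne hij)) (by simp)

theorem mul_norm_le_norm_sum (hx : HasUpperC₀Estimate 𝕜 x τ) {L : ℝ} (hL : ∀ k, L ≤ ‖x k‖)
    {G : Finset ℕ} (a : ℕ → 𝕜) {j : ℕ} (hj : j ∈ G) :
    (2 * L - τ) * ‖a j‖ ≤ ‖∑ k ∈ G, a k • x k‖ := by
  classical
  obtain ⟨i, hi, hmax⟩ := G.exists_max_image (fun k => ‖a k‖) ⟨j, hj⟩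
  rcases le_or_gt (2 * L - τ) 0 with h | h
  · exact (mul_nonpos_of_nonpos_of_nonneg h (norm_nonneg _)).trans (norm_nonneg _)
  -- flipping the signs of all coefficients but the maximal one isolates `2 • a i • x i`
  set a' : ℕ → 𝕜 := fun k => if k = i then a k else -a k
  have hsum : ∑ k ∈ G, a k • x k + ∑ k ∈ G, a' k • x k = (2 : 𝕜) • a i • x i := by
    rw [← Finset.sum_add_distrib, Finset.sum_eq_single_of_mem i hi fun k _ hki => by
      simp [a', hki]]
    simp [a', two_smul]
  have ha' : ‖∑ k ∈ G, a' k • x k‖ ≤ τ * ‖a i‖ :=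
    hx.norm_sum_smul_le (norm_nonneg _) fun k hk => by
      simp only [a']
      split_ifs <;> simp [hmax k hk]
  have h2 : 2 * (‖a i‖ * L) ≤ ‖∑ k ∈ G, a k • x k‖ + τ * ‖a i‖ := calc
    2 * (‖a i‖ * L) ≤ ‖(2 : 𝕜) • a i • x i‖ := by
      rw [norm_smul, norm_smul, RCLike.norm_two]
      gcongr
      exact hL i
    _ ≤ _ := hsum ▸ (norm_add_le _ _).trans (add_le_add_right ha' _)
  nlinarith [mul_le_mul_of_nonneg_left (hmax j hj) h.le]

end HasUpperC₀Estimate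

theorem exists_shift_hasUpperC₀Estimate_almost_attained {x : ℕ → E} {A B η : ℝ}
    (hx : HasUpperC₀Estimate 𝕜 x B) (hA : 0 < A) (hxA : ∀ n, A ≤ ‖x n‖) (hη : 0 < η)
    (hη1 : η < 1) :
    ∃ m₀ τ, 0 < τ ∧ HasUpperC₀Estimate 𝕜 (fun n => x (n + m₀)) τ ∧
      ∀ m, ∃ (F : Finset ℕ) (b : ℕ → 𝕜), (∀ n ∈ F, m ≤ n) ∧ (∀ n ∈ F, ‖b n‖ ≤ 1) ∧
        η * τ < ‖∑ n ∈ F, b n • x (n + m₀)‖ := by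
  set T : ℕ → Set ℝ := fun m => {t | ∃ (F : Finset ℕ) (b : ℕ → 𝕜),
    (∀ n ∈ F, ‖b n‖ ≤ 1) ∧ ‖∑ n ∈ F, b n • x (n + m)‖ = t}
  have hbdd : ∀ m, BddAbove (T m) := fun m =>
    ⟨B, by rintro _ ⟨F, b, hb, rfl⟩; exact hx.comp_injective (add_left_injective m) F b hb⟩
  have hT : ∀ m, HasUpperC₀Estimate 𝕜 (fun n => x (n + m)) (sSup (T m)) := fun m F b hb =>
    le_csSup (hbdd m) ⟨F, b, hb, rfl⟩
  have hAT : ∀ m, A ≤ sSup (T m) := fun m =>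
    (hxA m).trans (by simpa using hT m {0} 1 (by simp))
  -- `sSup (T m)` is the best upper `c₀`-constant of the tail `(x (n + m))ₙ`
  set s := ⨅ m, sSup (T m)
  have hbddBelow : BddBelow (Set.range fun m => sSup (T m)) :=
    ⟨A, by rintro _ ⟨k, rfl⟩; exact hAT k⟩
  have hs : 0 < s := hA.trans_le (le_ciInf hAT)
  obtain ⟨m₀, hm₀⟩ : ∃ m₀, sSup (T m₀) < s / η :=
    exists_lt_of_ciInf_lt ((lt_div_iff₀ hη).2 (by nlinarith))
  refine ⟨m₀, _, hA.trans_le (hAT m₀), hT m₀, fun m => ?_⟩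
  have hlt : η * sSup (T m₀) < sSup (T (m + m₀)) :=
    ((lt_div_iff₀' hη).1 hm₀).trans_le (ciInf_le hbddBelow _)
  have hne : (T (m + m₀)).Nonempty := ⟨_, ∅, 0, by simp, rfl⟩
  obtain ⟨_, ⟨F, b, hb, rfl⟩, hFb⟩ := exists_lt_of_lt_csSup hne hlt
  refine ⟨F.map (addRightEmbedding m), fun n => b (n - m), by simp, by simpa using hb, ?_⟩
  simpa [add_assoc] using hFb

theorem exists_pairwise_disjoint_of_forall_exists_ge {α : Type*} {p : Finset ℕ → α → Prop}
    (h : ∀ m, ∃ F a, (∀ n ∈ F, m ≤ n) ∧ p F a) :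
    ∃ (F : ℕ → Finset ℕ) (a : ℕ → α), Pairwise (Disjoint on F) ∧ ∀ k, p (F k) (a k) := by
  choose F a hF hp using h
  -- the `k`-th block is taken beyond `start k` and ends before `start (k + 1)`
  set next : ℕ → ℕ := fun m => m + (F m).sup id + 1
  set start : ℕ → ℕ := fun k => next^[k] 0
  have hstart : ∀ k, start (k + 1) = next (start k) := fun k => iterate_succ_apply' _ _ _
  have hmono : Monotone start := monotone_nat_of_le_succ fun k => by
    rw [hstart]; simp only [next]; omega
  have hlt : ∀ k, ∀ n ∈ F (start k), n < start (k + 1) := fun k n hn => by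
    have := Finset.le_sup (f := id) hn
    rw [hstart]; simp only [next, id] at this ⊢; omega
  refine ⟨fun k => F (start k), fun k => a (start k), (pairwise_disjoint_on _).2 fun i j hij =>
    Finset.disjoint_left.2 fun n hni hnj => ?_, fun k => hp _⟩
  have := hF _ n hnj
  have := hlt i n hni
  have := hmono (show i + 1 ≤ j from hij)
  omega

theorem exists_biorthogonal_of_mul_norm_le {u : ℕ → E} {r : ℝ} (hr : 0 < r)
    (hu : ∀ (G : Finset ℕ) (a : ℕ → 𝕜), ∀ j ∈ G, r * ‖a j‖ ≤ ‖∑ k ∈ G, a k • u k‖) :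
    ∃ ψ : ℕ → E →L[𝕜] 𝕜, (∀ k, ‖ψ k‖ ≤ r⁻¹) ∧ ∀ k j, ψ k (u j) = if k = j then 1 else 0 := by
  have hli : LinearIndependent 𝕜 u := linearIndependent_iff'.2 fun G a hsum j hj => by
    have := hu G a j hj
    rw [hsum, norm_zero] at this
    exact norm_le_zero_iff.1 (by nlinarith [norm_nonneg (a j)])
  set b := Module.Basis.span hli
  have hcoord : ∀ k (ξ : Submodule.span 𝕜 (Set.range u)), ‖b.coord k ξ‖ ≤ r⁻¹ * ‖ξ‖ := by
    intro k ξ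
    have hξ : (ξ : E) = ∑ i ∈ (b.repr ξ).support, b.repr ξ i • u i := by
      conv_lhs => rw [← b.linearCombination_repr ξ]
      simp [Finsupp.linearCombination_apply, Finsupp.sum, b, Module.Basis.span_apply]
    by_cases hk : k ∈ (b.repr ξ).support
    · rw [le_inv_mul_iff₀ hr]
      simpa [hξ] using hu _ _ k hk
    · simp [Finsupp.notMem_support_iff.1 hk]
      positivity
  choose ψ hψ hψn using fun k =>
    exists_extension_norm_eq _ ((b.coord k).mkContinuous r⁻¹ (hcoord k))
  refine ⟨ψ, fun k => (hψn k).trans_le (LinearMap.mkContinuous_norm_le _ (by positivity) _),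
    fun k j => ?_⟩
  refine (hψ k ⟨u j, Submodule.subset_span ⟨j, rfl⟩⟩).trans ?_
  rw [LinearMap.mkContinuous_apply, ← Module.Basis.span_apply hli j, Module.Basis.coord_apply,
    Module.Basis.repr_self, Finsupp.single_apply]
  exact if_congr eq_comm rfl rfl

variable (𝕜 E) in
def DualUnitBallWeakStarSeqCompact : Prop :=
  ∀ g : ℕ → (E →L[𝕜] 𝕜), (∀ n, ‖g n‖ ≤ 1) →
    ∃ ρ : ℕ → ℕ, StrictMono ρ ∧ ∃ g₀ : E →L[𝕜] 𝕜, ‖g₀‖ ≤ 1 ∧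
      ∀ y : E, Tendsto (fun n => g (ρ n) y) atTop (𝓝 (g₀ y))

namespace DualUnitBallWeakStarSeqCompact

theorem exists_tendsto_sub_zero (hE : DualUnitBallWeakStarSeqCompact 𝕜 E)
    {ψ : ℕ → E →L[𝕜] 𝕜} {K : ℝ} (hK : 0 < K) (hψ : ∀ n, ‖ψ n‖ ≤ K) :
    ∃ ρ : ℕ → ℕ, StrictMono ρ ∧
      ∀ y, Tendsto (fun k => ψ (ρ (2 * k)) y - ψ (ρ (2 * k + 1)) y) atTop (𝓝 0) := by
  have hK' : ‖(K : 𝕜)‖ = K := by rw [RCLike.norm_ofReal, abs_of_pos hK]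
  obtain ⟨ρ, hρ, g₀, -, hg₀⟩ := hE (fun n => (K : 𝕜)⁻¹ • ψ n) fun n => by
    rw [norm_smul, norm_inv, hK']
    exact inv_mul_le_one_of_le₀ (hψ n) hK.le
  refine ⟨ρ, hρ, fun y => ?_⟩
  have hlim : Tendsto (fun n => ψ (ρ n) y) atTop (𝓝 (K * g₀ y)) := by
    have hK0 : (K : 𝕜) ≠ 0 := by exact_mod_cast hK.ne'
    simpa [← mul_assoc, hK0] using (hg₀ y).const_mul (K : 𝕜)
  have hsub : ∀ σ : ℕ → ℕ, (∀ k, k ≤ σ k) → Tendsto (fun k => ψ (ρ (σ k)) y) atTop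
      (𝓝 (K * g₀ y)) := fun σ hσ => hlim.comp (tendsto_atTop_mono hσ tendsto_id)
  simpa using (hsub _ fun k => by omega).sub (hsub (fun k => 2 * k + 1) fun k => by omega)

theorem exists_biorthogonal_weakStar_null (hE : DualUnitBallWeakStarSeqCompact 𝕜 E)
    {W : Submodule 𝕜 E} {u : ℕ → E} (huW : ∀ k, u k ∈ W) {τ : ℝ}
    (hu : HasUpperC₀Estimate 𝕜 u τ) {ψ : ℕ → E →L[𝕜] 𝕜} {K : ℝ} (hK : 0 < K)
    (hψ : ∀ k, ‖ψ k‖ ≤ K) (hψu : ∀ k j, ψ k (u j) = if k = j then 1 else 0) :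
    ∃ (v : ℕ → E) (φ : ℕ → E →L[𝕜] 𝕜), (∀ k, v k ∈ W) ∧ HasUpperC₀Estimate 𝕜 v τ ∧
      (∀ k, ‖φ k‖ ≤ K) ∧ (∀ y, Tendsto (fun k => φ k y) atTop (𝓝 0)) ∧
      ∀ k j, φ k (v j) = if k = j then 1 else 0 := by
  obtain ⟨ρ, hρ, hlim⟩ := hE.exists_tendsto_sub_zero hK hψ
  have hρ : ∀ a b, ρ a = ρ b ↔ a = b := fun _ _ => hρ.injective.eq_iff
  refine ⟨fun k => u (ρ (2 * k)) - u (ρ (2 * k + 1)),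
    fun k => (2 : 𝕜)⁻¹ • (ψ (ρ (2 * k)) - ψ (ρ (2 * k + 1))),
    fun k => W.sub_mem (huW _) (huW _), ?_, fun k => ?_, fun y => ?_, fun k j => ?_⟩
  · convert hu.sum_blocks (H := fun k => {ρ (2 * k), ρ (2 * k + 1)})
      (c := fun k n => if n = ρ (2 * k) then 1 else -1) (fun i j hij => ?_)
      (fun k n _ => by split_ifs <;> simp) using 2 with k
    · rw [Finset.sum_pair (by simp [hρ])]
      simp [hρ, sub_eq_add_neg]
    · simp [hρ]
      omega
  · calc ‖(2 : 𝕜)⁻¹ • (ψ (ρ (2 * k)) - ψ (ρ (2 * k + 1)))‖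
        ≤ 2⁻¹ * (‖ψ (ρ (2 * k))‖ + ‖ψ (ρ (2 * k + 1))‖) := by
          rw [norm_smul, norm_inv, RCLike.norm_two]
          gcongr
          exact norm_sub_le _ _
      _ ≤ K := by linarith [hψ (ρ (2 * k)), hψ (ρ (2 * k + 1))]
  · simpa using (hlim y).const_mul (2⁻¹ : 𝕜)
  · simp only [FunLike.coe_smul, FunLike.coe_sub, Pi.smul_apply,
      Pi.sub_apply, map_sub, hψu, hρ, smul_eq_mul]
    split_ifs <;> first | omega | norm_num

end DualUnitBallWeakStarSeqCompact

theorem exists_clm_to_c₀_apply {φ : ℕ → E →L[𝕜] 𝕜} {K : ℝ} (hφ : ∀ k, ‖φ k‖ ≤ K)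
    (hφ0 : ∀ y, Tendsto (fun k => φ k y) atTop (𝓝 0)) :
    ∃ S : E →L[𝕜] C₀(ℕ, 𝕜), ‖S‖ ≤ K ∧ ∀ y k, S y k = φ k y := by
  let S : E →ₗ[𝕜] C₀(ℕ, 𝕜) :=
    { toFun y := ⟨⟨fun k => φ k y, continuous_of_discreteTopology⟩, by
        rw [cocompact_eq_atTop]; exact hφ0 y⟩
      map_add' y z := by ext k; simp
      map_smul' c y := by ext k; simp }
  have hK : 0 ≤ K := (norm_nonneg _).trans (hφ 0)
  have hS : ∀ y, ‖S y‖ ≤ K * ‖y‖ := fun y =>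
    ZeroAtInftyContinuousMap.norm_le_of_forall_le (by positivity) fun k =>
      (φ k).le_of_opNorm_le (hφ k) y
  exact ⟨S.mkContinuous K hS, S.mkContinuous_norm_le hK hS, fun _ _ => rfl⟩

theorem HasUpperC₀Estimate.summable_smul [CompleteSpace E] {w : ℕ → E} {θ : ℝ}
    (hw : HasUpperC₀Estimate 𝕜 w θ) (c : C₀(ℕ, 𝕜)) : Summable fun k => c k • w k := by
  refine summable_iff_vanishing.2 fun U hU => ?_
  obtain ⟨ε, hε, hball⟩ := Metric.mem_nhds_iff.1 hU
  have hθ := hw.nonneg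
  have hc : Tendsto c atTop (𝓝 0) := cocompact_eq_atTop (α := ℕ) ▸ c.zero_at_infty'
  obtain ⟨N, hN⟩ := Metric.tendsto_atTop.1 hc (ε / (θ + 1)) (by positivity)
  refine ⟨Finset.range N, fun t ht => hball ?_⟩
  rw [Metric.mem_ball, dist_zero_right]
  calc ‖∑ k ∈ t, c k • w k‖ ≤ θ * (ε / (θ + 1)) :=
        hw.norm_sum_smul_le (by positivity) fun k hk => by
          simpa using (hN k (not_lt.1 fun h =>
            Finset.disjoint_left.1 ht hk (Finset.mem_range.2 h))).le
    _ < (θ + 1) * (ε / (θ + 1)) := by gcongr; linarith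
    _ = ε := mul_div_cancel₀ _ (by positivity)

theorem HasUpperC₀Estimate.exists_clm_from_c₀_hasSum [CompleteSpace E] {w : ℕ → E} {θ : ℝ}
    (hw : HasUpperC₀Estimate 𝕜 w θ) :
    ∃ T : C₀(ℕ, 𝕜) →L[𝕜] E, ‖T‖ ≤ θ ∧ ∀ c, HasSum (fun k => c k • w k) (T c) := by
  let T : C₀(ℕ, 𝕜) →ₗ[𝕜] E :=
    { toFun c := ∑' k, c k • w k
      map_add' c d := by
        simp only [ZeroAtInftyContinuousMap.add_apply, add_smul]
        exact (hw.summable_smul c).tsum_add (hw.summable_smul d)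
      map_smul' a c := by
        simp only [ZeroAtInftyContinuousMap.smul_apply, smul_eq_mul, mul_smul, RingHom.id_apply]
        exact (hw.summable_smul c).tsum_const_smul a }
  have hT : ∀ c, ‖T c‖ ≤ θ * ‖c‖ := fun c =>
    le_of_tendsto' (hw.summable_smul c).hasSum.norm fun G =>
      hw.norm_sum_smul_le (norm_nonneg c) fun k _ => c.norm_apply_le k
  exact ⟨T.mkContinuous θ hT, T.mkContinuous_norm_le hw.nonneg hT,
    fun c => (hw.summable_smul c).hasSum⟩

theorem exists_equiv_range_comp_of_leftInverse {S : F →L[𝕜] E} {T : E →L[𝕜] F}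
    (h : ∀ c, S (T c) = c) :
    ∃ e : LinearMap.range ((T ∘L S : F →L[𝕜] F) : F →ₗ[𝕜] F) ≃L[𝕜] E,
      ‖(e : LinearMap.range ((T ∘L S : F →L[𝕜] F) : F →ₗ[𝕜] F) →L[𝕜] E)‖ ≤ ‖S‖ ∧
        ‖(e.symm : E →L[𝕜] LinearMap.range ((T ∘L S : F →L[𝕜] F) : F →ₗ[𝕜] F))‖ ≤ ‖T‖ := by
  set R := LinearMap.range ((T ∘L S : F →L[𝕜] F) : F →ₗ[𝕜] F)
  let f₁ : R →L[𝕜] E := S ∘L R.subtypeL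
  let f₂ : E →L[𝕜] R := T.codRestrict R fun c => ⟨T c, by simp [h]⟩
  have h₁ : LeftInverse f₂ f₁ := by
    rintro ⟨_, y, rfl⟩
    exact Subtype.ext (congrArg T (h (S y)))
  have h₂ : RightInverse f₂ f₁ := h
  refine ⟨.equivOfInverse f₁ f₂ h₁ h₂, ?_, ?_⟩
  · exact (S.opNorm_comp_le _).trans (mul_le_of_le_one_right (norm_nonneg _) R.norm_subtypeL_le)
  · exact f₂.opNorm_le_bound (norm_nonneg _) fun c => T.le_opNorm c

theorem exists_projection_of_biorthogonal [CompleteSpace E] {W : Submodule 𝕜 E}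
    (hW : IsClosed (W : Set E)) {w : ℕ → E} (hwW : ∀ k, w k ∈ W) {θ : ℝ}
    (hw : HasUpperC₀Estimate 𝕜 w θ) {φ : ℕ → E →L[𝕜] 𝕜} {K : ℝ} (hφ : ∀ k, ‖φ k‖ ≤ K)
    (hφ0 : ∀ y, Tendsto (fun k => φ k y) atTop (𝓝 0))
    (hφw : ∀ k j, φ k (w j) = if k = j then 1 else 0) :
    ∃ P : E →L[𝕜] E, P ∘L P = P ∧ ‖P‖ ≤ θ * K ∧ Set.range P ⊆ W ∧
      ∃ e : LinearMap.range (P : E →ₗ[𝕜] E) ≃L[𝕜] C₀(ℕ, 𝕜),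
        ‖(e : LinearMap.range (P : E →ₗ[𝕜] E) →L[𝕜] C₀(ℕ, 𝕜))‖ *
          ‖(e.symm : C₀(ℕ, 𝕜) →L[𝕜] LinearMap.range (P : E →ₗ[𝕜] E))‖ ≤ θ * K := by
  obtain ⟨S, hS, hSφ⟩ := exists_clm_to_c₀_apply hφ hφ0
  obtain ⟨T, hT, hTw⟩ := hw.exists_clm_from_c₀_hasSum
  have hST : ∀ c, S (T c) = c := fun c => by
    ext k
    rw [hSφ]
    refine ((hTw c).mapL (φ k)).unique ?_
    simpa [hφw] using hasSum_single (f := fun j => φ k (c j • w j)) k fun j hj => by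
      simp [hφw, Ne.symm hj]
  obtain ⟨e, he, he'⟩ := exists_equiv_range_comp_of_leftInverse hST
  have hK : 0 ≤ K := (norm_nonneg _).trans (hφ 0)
  refine ⟨T ∘L S, by ext y; simp [hST], ?_, ?_, e, ?_⟩
  · calc ‖T ∘L S‖ ≤ ‖T‖ * ‖S‖ := T.opNorm_comp_le S
      _ ≤ θ * K := by gcongr; exact hw.nonneg
  · rintro _ ⟨y, rfl⟩
    exact hW.mem_of_tendsto (hTw (S y)) (.of_forall fun G =>
      W.sum_mem fun k _ => W.smul_mem _ (hwW k))
  · calc _ ≤ ‖S‖ * ‖T‖ := by gcongr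
      _ ≤ K * θ := by gcongr
      _ = θ * K := mul_comm _ _

end

theorem statement12_general {𝕜 : Type*} [RCLike 𝕜]
    {Y : Type*} [NormedAddCommGroup Y] [NormedSpace 𝕜 Y] [CompleteSpace Y]
    (hY : ∀ g : ℕ → (Y →L[𝕜] 𝕜), (∀ n, ‖g n‖ ≤ 1) →
      ∃ ρ : ℕ → ℕ, StrictMono ρ ∧ ∃ g₀ : Y →L[𝕜] 𝕜, ‖g₀‖ ≤ 1 ∧
        ∀ y : Y, Tendsto (fun n => g (ρ n) y) atTop (nhds (g₀ y)))
    (Z : Submodule 𝕜 Y)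
    (hc₀ : ∃ W : Submodule 𝕜 Y, W ≤ Z ∧ IsClosed (W : Set Y) ∧
      Nonempty (↥W ≃L[𝕜] C₀(ℕ, 𝕜)))
    (C : ℝ) (hC : 1 < C) :
    ∃ P : Y →L[𝕜] Y, P ∘L P = P ∧ ‖P‖ ≤ C ∧ Set.range ⇑P ⊆ (Z : Set Y) ∧
      ∃ e : ↥(LinearMap.range (P : Y →ₗ[𝕜] Y)) ≃L[𝕜] C₀(ℕ, 𝕜),
        ‖(e : ↥(LinearMap.range (P : Y →ₗ[𝕜] Y)) →L[𝕜] C₀(ℕ, 𝕜))‖ *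
          ‖(e.symm : C₀(ℕ, 𝕜) →L[𝕜] ↥(LinearMap.range (P : Y →ₗ[𝕜] Y)))‖ ≤ C := by
  obtain ⟨W, hWZ, hWc, ⟨e⟩⟩ := hc₀
  set ι : C₀(ℕ, 𝕜) →L[𝕜] Y := W.subtypeL ∘L (e.symm : C₀(ℕ, 𝕜) →L[𝕜] W)
  obtain ⟨A, hA, hxA⟩ := exists_pos_le_norm_symm_c₀Single e
  have hC0 : 0 < C := zero_lt_one.trans hC
  -- chosen so that `2 η - 1 = C⁻¹`
  set η := (1 + C⁻¹) / 2 with hη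
  obtain ⟨m₀, τ, hτ, hxτ, hblocks⟩ := exists_shift_hasUpperC₀Estimate_almost_attained (η := η)
    (hasUpperC₀Estimate_c₀Single.map ι) hA hxA (by positivity)
    (by rw [hη]; linarith [inv_lt_one_of_one_lt₀ hC])
  obtain ⟨F, b, hFd, hFb⟩ := exists_pairwise_disjoint_of_forall_exists_ge hblocks
  set u : ℕ → Y := fun k => ∑ n ∈ F k, b k n • ι (c₀Single (n + m₀))
  have hu : HasUpperC₀Estimate 𝕜 u τ := hxτ.sum_blocks hFd fun k => (hFb k).1
  have hr : 2 * (η * τ) - τ = τ * C⁻¹ := by rw [hη]; ring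
  obtain ⟨ψ, hψ, hψu⟩ := exists_biorthogonal_of_mul_norm_le (by positivity : 0 < τ * C⁻¹)
    fun G a j hj => hr ▸ hu.mul_norm_le_norm_sum (fun k => (hFb k).2.le) a hj
  obtain ⟨v, φ, hvW, hv, hφ, hφ0, hφv⟩ :=
    DualUnitBallWeakStarSeqCompact.exists_biorthogonal_weakStar_null hY (W := W)
      (fun k => W.sum_mem fun n _ => W.smul_mem _ (e.symm _).2) hu (by positivity) hψ hψu
  obtain ⟨P, hPP, hP, hPW, e', he'⟩ := exists_projection_of_biorthogonal hWc hvW hv hφ hφ0 hφv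
  have hθK : τ * (τ * C⁻¹)⁻¹ = C := by field_simp
  exact ⟨P, hPP, hθK ▸ hP, hPW.trans hWZ, e', hθK ▸ he'⟩

/-- Dowling–Randrianantoanina–Turett. Let `Y` be a Banach space whose
dual unit ball is weak* sequentially compact and let `Z` be a closed subspace of `Y`
containing a closed subspace isomorphic to `c₀`. Then for every `C > 1` there is a
projection `P` on `Y` with `‖P‖ ≤ C` whose range is contained in `Z` and is
`C`-isomorphic to `c₀`. -/
theorem statement12 {𝕜 : Type*} [RCLike 𝕜]
    {Y : Type*} [NormedAddCommGroup Y] [NormedSpace 𝕜 Y] [CompleteSpace Y]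
    (hY : ∀ g : ℕ → (Y →L[𝕜] 𝕜), (∀ n, ‖g n‖ ≤ 1) →
      ∃ ρ : ℕ → ℕ, StrictMono ρ ∧ ∃ g₀ : Y →L[𝕜] 𝕜, ‖g₀‖ ≤ 1 ∧
        ∀ y : Y, Tendsto (fun n => g (ρ n) y) atTop (nhds (g₀ y)))
    (Z : Submodule 𝕜 Y) (hZ : IsClosed (Z : Set Y))
    (hc₀ : ∃ W : Submodule 𝕜 Y, W ≤ Z ∧ IsClosed (W : Set Y) ∧
      Nonempty (↥W ≃L[𝕜] C₀(ℕ, 𝕜)))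
    (C : ℝ) (hC : 1 < C) :
    ∃ P : Y →L[𝕜] Y, P ∘L P = P ∧ ‖P‖ ≤ C ∧ Set.range ⇑P ⊆ (Z : Set Y) ∧
      ∃ e : ↥(LinearMap.range (P : Y →ₗ[𝕜] Y)) ≃L[𝕜] C₀(ℕ, 𝕜),
        ‖(e : ↥(LinearMap.range (P : Y →ₗ[𝕜] Y)) →L[𝕜] C₀(ℕ, 𝕜))‖ *
          ‖(e.symm : C₀(ℕ, 𝕜) →L[𝕜] ↥(LinearMap.range (P : Y →ₗ[𝕜] Y)))‖ ≤ C :=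
  statement12_general hY Z hc₀ C hC
end

section
/- Let X₁ and X₂ be Banach spaces, let X = X₁ ⊕ X₂ with the norm ‖(x₁,x₂)‖ = ‖x₁‖ + ‖x₂‖, and for m ∈ {1,2} let J_m : X_m → X and Q_m : X → X_m be the canonical coordinate embedding and projection. Let I be a closed two-sided ideal of B(X) and for j,k ∈ {1,2} set I_{j,k} = {Q_j ∘ T ∘ J_k : T ∈ I}. Suppose: (i) there are constants C₁, C₂ ≥ 1 such that for j = 1, 2 and every T ∈ B(X_j) with dist(T, I_{j,j}) = 1 there exist R, S ∈ B(X_j) with dist(R, I_{j,j})·dist(S, I_{j,j}) ≤ C_j such that R∘T∘S ∉ I_{j,j} and (R∘T∘S)² − R∘T∘S ∈ I_{j,j}; and (ii) I_{1,2} = B(X₂, X₁) and I_{2,1} = B(X₁, X₂). Then for every T ∈ B(X) with dist(T, I) = 1 there exist U, V ∈ B(X) with dist(U, I)·dist(V, I) ≤ max(C₁, C₂) such that U∘T∘V ∉ I and (U∘T∘V)² − U∘T∘V ∈ I. (That is, the quotient algebra B(X)/I has the idempotent factorization property with constant max(C₁, C₂).) -/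
/-!
Compressing by `Q ∘ · ∘ J` and dilating by `J ∘ · ∘ Q` are contractive and respect the ideal
and its quadrant, so an idempotent factorization of the compression `Q₁ T J₁` modulo `I₁₁`
dilates to one of `T` modulo `I`, with the same constant. Since the off-diagonal quadrants of
`I` are everything, `T` agrees modulo `I` with the block-diagonal operator
`J₁ (Q₁ T J₁) Q₁ + J₂ (Q₂ T J₂) Q₂`, whose norm in the `ℓ¹`-sum is the maximum of the norms of
its blocks. Hence `dist(T, I) ≤ max (dist(Q₁ T J₁, I₁₁), dist(Q₂ T J₂, I₂₂))`, while each
compression has distance at most `dist(T, I)`; so if `dist(T, I) = 1` one of the two diagonal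
compressions is at distance exactly `1` from its quadrant, and the hypothesis on that corner
applies.
-/

open Metric ContinuousLinearMap

theorem Metric.infDist_le_infDist_of_forall_exists_dist_le {α β : Type*} [PseudoMetricSpace α]
    [PseudoMetricSpace β] {a : α} {s : Set α} {b : β} {t : Set β} (ht : t.Nonempty)
    (h : ∀ y ∈ t, ∃ z ∈ s, dist a z ≤ dist b y) : infDist a s ≤ infDist b t := by
  have := ht.to_subtype
  rw [infDist_eq_iInf (s := t)]
  refine le_ciInf fun ⟨y, hy⟩ => ?_
  obtain ⟨z, hz, hzy⟩ := h y hy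
  exact (infDist_le_dist_of_mem hz).trans hzy

namespace IdempotentFactorization

variable {𝕜 : Type*} [RCLike 𝕜]
  {E : Type*} [NormedAddCommGroup E] [NormedSpace 𝕜 E]
  {F : Type*} [NormedAddCommGroup F] [NormedSpace 𝕜 F]
  {G : Type*} [NormedAddCommGroup G] [NormedSpace 𝕜 G]

/-- The paper's `I_{j,k}` is `quadrant I Q_j J_k`. -/
def quadrant (I : Submodule 𝕜 (E →L[𝕜] E)) (Q : E →L[𝕜] F) (J : G →L[𝕜] E) :
    Set (G →L[𝕜] F) :=
  {S | ∃ T ∈ I, S = Q ∘L T ∘L J}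

theorem comp_mem_quadrant {I : Submodule 𝕜 (E →L[𝕜] E)} {T : E →L[𝕜] E} (hT : T ∈ I)
    (Q : E →L[𝕜] F) (J : G →L[𝕜] E) : Q ∘L T ∘L J ∈ quadrant I Q J :=
  ⟨T, hT, rfl⟩

theorem quadrant_nonempty (I : Submodule 𝕜 (E →L[𝕜] E)) (Q : E →L[𝕜] F) (J : G →L[𝕜] E) :
    (quadrant I Q J).Nonempty :=
  ⟨_, comp_mem_quadrant I.zero_mem Q J⟩

def FactorsIdempotentMod (I : Set (E →L[𝕜] E)) (C : ℝ) (T : E →L[𝕜] E) : Prop :=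
  ∃ R S : E →L[𝕜] E, infDist R I * infDist S I ≤ C ∧
    R ∘L T ∘L S ∉ I ∧ (R ∘L T ∘L S) ∘L (R ∘L T ∘L S) - R ∘L T ∘L S ∈ I

theorem FactorsIdempotentMod.mono {I : Set (E →L[𝕜] E)} {C C' : ℝ} {T : E →L[𝕜] E}
    (h : FactorsIdempotentMod I C T) (hC : C ≤ C') : FactorsIdempotentMod I C' T :=
  let ⟨R, S, hRS, hnot, hidem⟩ := h
  ⟨R, S, hRS.trans hC, hnot, hidem⟩

/-- The idempotent factorization property of the quotient `B(E)/I`, with constant `C`. -/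
def HasIdempotentFactorization (I : Set (E →L[𝕜] E)) (C : ℝ) : Prop :=
  ∀ T : E →L[𝕜] E, infDist T I = 1 → FactorsIdempotentMod I C T

theorem norm_comp_comp_le {Q : E →L[𝕜] F} {J : G →L[𝕜] E} (hQ : ‖Q‖ ≤ 1) (hJ : ‖J‖ ≤ 1)
    (T : E →L[𝕜] E) : ‖Q ∘L T ∘L J‖ ≤ ‖T‖ :=
  calc ‖Q ∘L T ∘L J‖ ≤ ‖Q‖ * (‖T‖ * ‖J‖) :=
        (opNorm_comp_le _ _).trans (by gcongr; exact opNorm_comp_le _ _)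
    _ ≤ 1 * (‖T‖ * 1) := by gcongr
    _ = ‖T‖ := by ring

section Corner

variable {I : Submodule 𝕜 (E →L[𝕜] E)} {Q : E →L[𝕜] F} {J : F →L[𝕜] E}

theorem infDist_quadrant_le (hQ : ‖Q‖ ≤ 1) (hJ : ‖J‖ ≤ 1) (T : E →L[𝕜] E) :
    infDist (Q ∘L T ∘L J) (quadrant I Q J) ≤ infDist T I := by
  refine infDist_le_infDist_of_forall_exists_dist_le ⟨0, I.zero_mem⟩ fun W hW => ?_
  refine ⟨_, comp_mem_quadrant hW Q J, ?_⟩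
  have hdiff : Q ∘L T ∘L J - Q ∘L W ∘L J = Q ∘L (T - W) ∘L J := by ext x; simp
  rw [dist_eq_norm, dist_eq_norm, hdiff]
  exact norm_comp_comp_le hQ hJ _

theorem infDist_dilate_le (hQ : ‖Q‖ ≤ 1) (hJ : ‖J‖ ≤ 1)
    (hI : ∀ T ∈ I, ∀ R S : E →L[𝕜] E, S ∘L T ∘L R ∈ I) (A : F →L[𝕜] F) :
    infDist (J ∘L A ∘L Q) I ≤ infDist A (quadrant I Q J) := by
  refine infDist_le_infDist_of_forall_exists_dist_le (quadrant_nonempty I Q J) ?_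
  rintro _ ⟨W, hW, rfl⟩
  refine ⟨(J ∘L Q) ∘L W ∘L (J ∘L Q), hI W hW _ _, ?_⟩
  have hdiff : J ∘L A ∘L Q - (J ∘L Q) ∘L W ∘L (J ∘L Q) = J ∘L (A - Q ∘L W ∘L J) ∘L Q := by
    ext x; simp
  rw [dist_eq_norm, dist_eq_norm, hdiff]
  exact norm_comp_comp_le hJ hQ _

/-- The factors `R, S` of the compression are dilated to `J R Q, J S Q`. -/
theorem FactorsIdempotentMod.of_quadrant (hQ : ‖Q‖ ≤ 1) (hJ : ‖J‖ ≤ 1)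
    (hQJ : ∀ x, Q (J x) = x) (hI : ∀ T ∈ I, ∀ R S : E →L[𝕜] E, S ∘L T ∘L R ∈ I)
    {C : ℝ} {T : E →L[𝕜] E} (h : FactorsIdempotentMod (quadrant I Q J) C (Q ∘L T ∘L J)) :
    FactorsIdempotentMod I C T := by
  obtain ⟨R, S, hRS, hnot, W, hW, hWeq⟩ := h
  set M := R ∘L (Q ∘L T ∘L J) ∘L S
  have hM : (J ∘L R ∘L Q) ∘L T ∘L (J ∘L S ∘L Q) = J ∘L M ∘L Q := by ext x; simp [M]
  refine ⟨J ∘L R ∘L Q, J ∘L S ∘L Q, ?_, ?_, ?_⟩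
  · exact (mul_le_mul (infDist_dilate_le hQ hJ hI R) (infDist_dilate_le hQ hJ hI S)
      infDist_nonneg infDist_nonneg).trans hRS
  · rw [hM]
    refine fun hmem => hnot ⟨_, hmem, ?_⟩
    ext x; simp [hQJ]
  · have hsq : (J ∘L M ∘L Q) ∘L (J ∘L M ∘L Q) - J ∘L M ∘L Q = J ∘L (M ∘L M - M) ∘L Q := by
      ext x; simp [hQJ]
    rw [hM, hsq, hWeq]
    exact hI W hW (J ∘L Q) (J ∘L Q)

end Corner

section L1Sum

variable {X₁ : Type*} [NormedAddCommGroup X₁] [NormedSpace 𝕜 X₁]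
  {X₂ : Type*} [NormedAddCommGroup X₂] [NormedSpace 𝕜 X₂]

structure IsL1Decomposition (J₁ : X₁ →L[𝕜] E) (J₂ : X₂ →L[𝕜] E) (Q₁ : E →L[𝕜] X₁)
    (Q₂ : E →L[𝕜] X₂) : Prop where
  left_inv₁ : ∀ x, Q₁ (J₁ x) = x
  left_inv₂ : ∀ x, Q₂ (J₂ x) = x
  add_eq : ∀ x, J₁ (Q₁ x) + J₂ (Q₂ x) = x
  norm_J₁ : ∀ x, ‖J₁ x‖ = ‖x‖
  norm_J₂ : ∀ x, ‖J₂ x‖ = ‖x‖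
  norm_Q_add : ∀ x, ‖Q₁ x‖ + ‖Q₂ x‖ = ‖x‖

namespace IsL1Decomposition

variable {J₁ : X₁ →L[𝕜] E} {J₂ : X₂ →L[𝕜] E} {Q₁ : E →L[𝕜] X₁} {Q₂ : E →L[𝕜] X₂}

theorem symm (hD : IsL1Decomposition J₁ J₂ Q₁ Q₂) : IsL1Decomposition J₂ J₁ Q₂ Q₁ where
  left_inv₁ := hD.left_inv₂
  left_inv₂ := hD.left_inv₁
  add_eq x := (add_comm _ _).trans (hD.add_eq x)
  norm_J₁ := hD.norm_J₂
  norm_J₂ := hD.norm_J₁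
  norm_Q_add x := (add_comm _ _).trans (hD.norm_Q_add x)

theorem opNorm_J₁_le (hD : IsL1Decomposition J₁ J₂ Q₁ Q₂) : ‖J₁‖ ≤ 1 :=
  J₁.opNorm_le_bound zero_le_one fun x => by rw [hD.norm_J₁, one_mul]

theorem opNorm_Q₁_le (hD : IsL1Decomposition J₁ J₂ Q₁ Q₂) : ‖Q₁‖ ≤ 1 :=
  Q₁.opNorm_le_bound zero_le_one fun x => by
    rw [one_mul, ← hD.norm_Q_add]; exact le_add_of_nonneg_right (norm_nonneg _)

theorem eq_blocks (hD : IsL1Decomposition J₁ J₂ Q₁ Q₂) (T : E →L[𝕜] E) :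
    T = J₁ ∘L (Q₁ ∘L T ∘L J₁) ∘L Q₁ + J₁ ∘L (Q₁ ∘L T ∘L J₂) ∘L Q₂ +
      (J₂ ∘L (Q₂ ∘L T ∘L J₁) ∘L Q₁ + J₂ ∘L (Q₂ ∘L T ∘L J₂) ∘L Q₂) := by
  ext x
  conv_lhs => rw [← hD.add_eq x, map_add, ← hD.add_eq (T (J₁ (Q₁ x))),
    ← hD.add_eq (T (J₂ (Q₂ x)))]
  simp only [add_apply, comp_apply]
  abel

theorem norm_diag_le (hD : IsL1Decomposition J₁ J₂ Q₁ Q₂) (A : X₁ →L[𝕜] X₁)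
    (B : X₂ →L[𝕜] X₂) : ‖J₁ ∘L A ∘L Q₁ + J₂ ∘L B ∘L Q₂‖ ≤ max ‖A‖ ‖B‖ := by
  refine opNorm_le_bound _ ((norm_nonneg A).trans (le_max_left _ _)) fun x => ?_
  calc ‖J₁ (A (Q₁ x)) + J₂ (B (Q₂ x))‖
      ≤ ‖A (Q₁ x)‖ + ‖B (Q₂ x)‖ := by
        rw [← hD.norm_J₁, ← hD.norm_J₂]; exact norm_add_le _ _
    _ ≤ max ‖A‖ ‖B‖ * ‖Q₁ x‖ + max ‖A‖ ‖B‖ * ‖Q₂ x‖ := by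
        gcongr
        · exact (A.le_opNorm _).trans (by gcongr; exact le_max_left _ _)
        · exact (B.le_opNorm _).trans (by gcongr; exact le_max_right _ _)
    _ = max ‖A‖ ‖B‖ * ‖x‖ := by rw [← mul_add, hD.norm_Q_add]

theorem infDist_le_max_infDist_quadrant (hD : IsL1Decomposition J₁ J₂ Q₁ Q₂)
    {I : Submodule 𝕜 (E →L[𝕜] E)} (hI : ∀ T ∈ I, ∀ R S : E →L[𝕜] E, S ∘L T ∘L R ∈ I)
    (hI₁₂ : quadrant I Q₁ J₂ = Set.univ) (hI₂₁ : quadrant I Q₂ J₁ = Set.univ)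
    (T : E →L[𝕜] E) :
    infDist T I ≤ max (infDist (Q₁ ∘L T ∘L J₁) (quadrant I Q₁ J₁))
      (infDist (Q₂ ∘L T ∘L J₂) (quadrant I Q₂ J₂)) := by
  refine le_of_forall_pos_le_add fun ε hε => ?_
  obtain ⟨_, ⟨W₁, hW₁, rfl⟩, hdist₁⟩ :=
    (infDist_lt_iff (quadrant_nonempty I Q₁ J₁)).1 (lt_add_of_pos_right _ hε)
  obtain ⟨_, ⟨W₂, hW₂, rfl⟩, hdist₂⟩ :=
    (infDist_lt_iff (quadrant_nonempty I Q₂ J₂)).1 (lt_add_of_pos_right _ hε)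
  obtain ⟨V₁, hV₁, hV₁T⟩ : Q₁ ∘L T ∘L J₂ ∈ quadrant I Q₁ J₂ := hI₁₂ ▸ trivial
  obtain ⟨V₂, hV₂, hV₂T⟩ : Q₂ ∘L T ∘L J₁ ∈ quadrant I Q₂ J₁ := hI₂₁ ▸ trivial
  -- `W` agrees with `T` off the diagonal and with `W₁`, `W₂` on it
  set W := J₁ ∘L (Q₁ ∘L W₁ ∘L J₁) ∘L Q₁ + J₁ ∘L (Q₁ ∘L V₁ ∘L J₂) ∘L Q₂ +
    (J₂ ∘L (Q₂ ∘L V₂ ∘L J₁) ∘L Q₁ + J₂ ∘L (Q₂ ∘L W₂ ∘L J₂) ∘L Q₂)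
  have hW : W ∈ I :=
    add_mem (add_mem (hI W₁ hW₁ (J₁ ∘L Q₁) (J₁ ∘L Q₁)) (hI V₁ hV₁ (J₂ ∘L Q₂) (J₁ ∘L Q₁)))
      (add_mem (hI V₂ hV₂ (J₁ ∘L Q₁) (J₂ ∘L Q₂)) (hI W₂ hW₂ (J₂ ∘L Q₂) (J₂ ∘L Q₂)))
  have hTW : T - W = J₁ ∘L (Q₁ ∘L T ∘L J₁ - Q₁ ∘L W₁ ∘L J₁) ∘L Q₁ +
      J₂ ∘L (Q₂ ∘L T ∘L J₂ - Q₂ ∘L W₂ ∘L J₂) ∘L Q₂ := by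
    conv_lhs => rw [hD.eq_blocks T, hV₁T, hV₂T]
    simp only [W, comp_sub, sub_comp]
    abel
  calc infDist T I ≤ ‖T - W‖ := (infDist_le_dist_of_mem hW).trans_eq (dist_eq_norm _ _)
    _ ≤ max (dist (Q₁ ∘L T ∘L J₁) (Q₁ ∘L W₁ ∘L J₁))
          (dist (Q₂ ∘L T ∘L J₂) (Q₂ ∘L W₂ ∘L J₂)) := by
        rw [hTW, dist_eq_norm, dist_eq_norm]; exact hD.norm_diag_le _ _
    _ ≤ max _ _ + ε := by
        rw [← max_add_add_right]; exact max_le_max hdist₁.le hdist₂.le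

theorem of_withLp {J₁ : X₁ →L[𝕜] WithLp 1 (X₁ × X₂)} {J₂ : X₂ →L[𝕜] WithLp 1 (X₁ × X₂)}
    {Q₁ : WithLp 1 (X₁ × X₂) →L[𝕜] X₁} {Q₂ : WithLp 1 (X₁ × X₂) →L[𝕜] X₂}
    (hJ₁ : ∀ x : X₁, J₁ x = (WithLp.equiv 1 (X₁ × X₂)).symm (x, 0))
    (hJ₂ : ∀ x : X₂, J₂ x = (WithLp.equiv 1 (X₁ × X₂)).symm (0, x))
    (hQ₁ : ∀ x : WithLp 1 (X₁ × X₂), Q₁ x = (WithLp.equiv 1 (X₁ × X₂) x).1)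
    (hQ₂ : ∀ x : WithLp 1 (X₁ × X₂), Q₂ x = (WithLp.equiv 1 (X₁ × X₂) x).2) :
    IsL1Decomposition J₁ J₂ Q₁ Q₂ where
  left_inv₁ x := by simp [hJ₁, hQ₁]
  left_inv₂ x := by simp [hJ₂, hQ₂]
  add_eq x := by
    apply (WithLp.equiv 1 (X₁ × X₂)).injective
    simp [hJ₁, hJ₂, hQ₁, hQ₂, Prod.ext_iff]
  norm_J₁ x := by rw [hJ₁]; exact WithLp.norm_toLp_fst 1 X₁ X₂ x
  norm_J₂ x := by rw [hJ₂]; exact WithLp.norm_toLp_snd 1 X₁ X₂ x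
  norm_Q_add x := by simp [hQ₁, hQ₂, WithLp.prod_norm_eq_add (p := 1) (by norm_num)]

end IsL1Decomposition

end L1Sum

end IdempotentFactorization

open IdempotentFactorization

theorem statement15_general {𝕜 : Type*} [RCLike 𝕜]
    {X₁ : Type*} [NormedAddCommGroup X₁] [NormedSpace 𝕜 X₁]
    {X₂ : Type*} [NormedAddCommGroup X₂] [NormedSpace 𝕜 X₂]
    (J₁ : X₁ →L[𝕜] WithLp 1 (X₁ × X₂)) (J₂ : X₂ →L[𝕜] WithLp 1 (X₁ × X₂))
    (Q₁ : WithLp 1 (X₁ × X₂) →L[𝕜] X₁) (Q₂ : WithLp 1 (X₁ × X₂) →L[𝕜] X₂)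
    (hJ₁ : ∀ x : X₁, J₁ x = (WithLp.equiv 1 (X₁ × X₂)).symm (x, 0))
    (hJ₂ : ∀ x : X₂, J₂ x = (WithLp.equiv 1 (X₁ × X₂)).symm (0, x))
    (hQ₁ : ∀ x : WithLp 1 (X₁ × X₂), Q₁ x = (WithLp.equiv 1 (X₁ × X₂) x).1)
    (hQ₂ : ∀ x : WithLp 1 (X₁ × X₂), Q₂ x = (WithLp.equiv 1 (X₁ × X₂) x).2)
    (I : Submodule 𝕜 (WithLp 1 (X₁ × X₂) →L[𝕜] WithLp 1 (X₁ × X₂)))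
    (hI_ideal : ∀ T ∈ I, ∀ R S : WithLp 1 (X₁ × X₂) →L[𝕜] WithLp 1 (X₁ × X₂),
      S ∘L T ∘L R ∈ I)
    (I₁₁ : Set (X₁ →L[𝕜] X₁)) (hI₁₁ : I₁₁ = {S | ∃ T ∈ I, S = Q₁ ∘L T ∘L J₁})
    (I₂₂ : Set (X₂ →L[𝕜] X₂)) (hI₂₂ : I₂₂ = {S | ∃ T ∈ I, S = Q₂ ∘L T ∘L J₂})
    (hI₁₂ : {S : X₂ →L[𝕜] X₁ | ∃ T ∈ I, S = Q₁ ∘L T ∘L J₂} = Set.univ)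
    (hI₂₁ : {S : X₁ →L[𝕜] X₂ | ∃ T ∈ I, S = Q₂ ∘L T ∘L J₁} = Set.univ)
    (C₁ C₂ : ℝ)
    (h₁ : ∀ T : X₁ →L[𝕜] X₁, Metric.infDist T I₁₁ = 1 →
      ∃ R S : X₁ →L[𝕜] X₁, Metric.infDist R I₁₁ * Metric.infDist S I₁₁ ≤ C₁ ∧
        R ∘L T ∘L S ∉ I₁₁ ∧
        (R ∘L T ∘L S) ∘L (R ∘L T ∘L S) - R ∘L T ∘L S ∈ I₁₁)
    (h₂ : ∀ T : X₂ →L[𝕜] X₂, Metric.infDist T I₂₂ = 1 →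
      ∃ R S : X₂ →L[𝕜] X₂, Metric.infDist R I₂₂ * Metric.infDist S I₂₂ ≤ C₂ ∧
        R ∘L T ∘L S ∉ I₂₂ ∧
        (R ∘L T ∘L S) ∘L (R ∘L T ∘L S) - R ∘L T ∘L S ∈ I₂₂) :
    ∀ T : WithLp 1 (X₁ × X₂) →L[𝕜] WithLp 1 (X₁ × X₂),
      Metric.infDist T (I : Set (WithLp 1 (X₁ × X₂) →L[𝕜] WithLp 1 (X₁ × X₂))) = 1 →
        ∃ U V : WithLp 1 (X₁ × X₂) →L[𝕜] WithLp 1 (X₁ × X₂),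
          Metric.infDist U (I : Set (WithLp 1 (X₁ × X₂) →L[𝕜] WithLp 1 (X₁ × X₂))) *
              Metric.infDist V (I : Set (WithLp 1 (X₁ × X₂) →L[𝕜] WithLp 1 (X₁ × X₂))) ≤
            max C₁ C₂ ∧
          U ∘L T ∘L V ∉ I ∧
          (U ∘L T ∘L V) ∘L (U ∘L T ∘L V) - U ∘L T ∘L V ∈ I := by
  obtain rfl : I₁₁ = quadrant I Q₁ J₁ := hI₁₁
  obtain rfl : I₂₂ = quadrant I Q₂ J₂ := hI₂₂
  change HasIdempotentFactorization (quadrant I Q₁ J₁) C₁ at h₁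
  change HasIdempotentFactorization (quadrant I Q₂ J₂) C₂ at h₂
  show HasIdempotentFactorization
    (I : Set (WithLp 1 (X₁ × X₂) →L[𝕜] WithLp 1 (X₁ × X₂))) (max C₁ C₂)
  intro T hT
  have hD := IsL1Decomposition.of_withLp hJ₁ hJ₂ hQ₁ hQ₂
  set d₁ := infDist (Q₁ ∘L T ∘L J₁) (quadrant I Q₁ J₁)
  set d₂ := infDist (Q₂ ∘L T ∘L J₂) (quadrant I Q₂ J₂)
  have hd₁ : d₁ ≤ 1 := hT ▸ infDist_quadrant_le hD.opNorm_Q₁_le hD.opNorm_J₁_le T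
  have hd₂ : d₂ ≤ 1 := hT ▸ infDist_quadrant_le hD.symm.opNorm_Q₁_le hD.symm.opNorm_J₁_le T
  have hmax : 1 ≤ max d₁ d₂ := hT ▸ hD.infDist_le_max_infDist_quadrant hI_ideal hI₁₂ hI₂₁ T
  rcases max_choice d₁ d₂ with h | h
  · exact ((h₁ _ (by linarith)).mono (le_max_left C₁ C₂)).of_quadrant hD.opNorm_Q₁_le
      hD.opNorm_J₁_le hD.left_inv₁ hI_ideal
  · exact ((h₂ _ (by linarith)).mono (le_max_right C₁ C₂)).of_quadrant hD.symm.opNorm_Q₁_le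
      hD.symm.opNorm_J₁_le hD.left_inv₂ hI_ideal

/-- Let `X = X₁ ⊕ X₂` with the sum norm, with coordinate embeddings
`J₁, J₂` and projections `Q₁, Q₂`, and let `I` be a closed two-sided ideal of `B(X)` with
quadrants `I_{j,k}`. If the quotients by `I_{1,1}` and `I_{2,2}` have the idempotent
factorization property with constants `C₁` and `C₂` respectively, and the off-diagonal
quadrants are everything, then `B(X)/I` has the idempotent factorization property with
constant `max C₁ C₂`. -/
theorem statement15 {𝕜 : Type*} [RCLike 𝕜]
    {X₁ : Type*} [NormedAddCommGroup X₁] [NormedSpace 𝕜 X₁] [CompleteSpace X₁]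
    {X₂ : Type*} [NormedAddCommGroup X₂] [NormedSpace 𝕜 X₂] [CompleteSpace X₂]
    (J₁ : X₁ →L[𝕜] WithLp 1 (X₁ × X₂)) (J₂ : X₂ →L[𝕜] WithLp 1 (X₁ × X₂))
    (Q₁ : WithLp 1 (X₁ × X₂) →L[𝕜] X₁) (Q₂ : WithLp 1 (X₁ × X₂) →L[𝕜] X₂)
    (hJ₁ : ∀ x : X₁, J₁ x = (WithLp.equiv 1 (X₁ × X₂)).symm (x, 0))
    (hJ₂ : ∀ x : X₂, J₂ x = (WithLp.equiv 1 (X₁ × X₂)).symm (0, x))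
    (hQ₁ : ∀ x : WithLp 1 (X₁ × X₂), Q₁ x = (WithLp.equiv 1 (X₁ × X₂) x).1)
    (hQ₂ : ∀ x : WithLp 1 (X₁ × X₂), Q₂ x = (WithLp.equiv 1 (X₁ × X₂) x).2)
    (I : Submodule 𝕜 (WithLp 1 (X₁ × X₂) →L[𝕜] WithLp 1 (X₁ × X₂)))
    (hI_ideal : ∀ T ∈ I, ∀ R S : WithLp 1 (X₁ × X₂) →L[𝕜] WithLp 1 (X₁ × X₂),
      S ∘L T ∘L R ∈ I)
    (hI_closed : IsClosed (I : Set (WithLp 1 (X₁ × X₂) →L[𝕜] WithLp 1 (X₁ × X₂))))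
    (I₁₁ : Set (X₁ →L[𝕜] X₁)) (hI₁₁ : I₁₁ = {S | ∃ T ∈ I, S = Q₁ ∘L T ∘L J₁})
    (I₂₂ : Set (X₂ →L[𝕜] X₂)) (hI₂₂ : I₂₂ = {S | ∃ T ∈ I, S = Q₂ ∘L T ∘L J₂})
    (hI₁₂ : {S : X₂ →L[𝕜] X₁ | ∃ T ∈ I, S = Q₁ ∘L T ∘L J₂} = Set.univ)
    (hI₂₁ : {S : X₁ →L[𝕜] X₂ | ∃ T ∈ I, S = Q₂ ∘L T ∘L J₁} = Set.univ)
    (C₁ C₂ : ℝ) (hC₁ : 1 ≤ C₁) (hC₂ : 1 ≤ C₂)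
    (h₁ : ∀ T : X₁ →L[𝕜] X₁, Metric.infDist T I₁₁ = 1 →
      ∃ R S : X₁ →L[𝕜] X₁, Metric.infDist R I₁₁ * Metric.infDist S I₁₁ ≤ C₁ ∧
        R ∘L T ∘L S ∉ I₁₁ ∧
        (R ∘L T ∘L S) ∘L (R ∘L T ∘L S) - R ∘L T ∘L S ∈ I₁₁)
    (h₂ : ∀ T : X₂ →L[𝕜] X₂, Metric.infDist T I₂₂ = 1 →
      ∃ R S : X₂ →L[𝕜] X₂, Metric.infDist R I₂₂ * Metric.infDist S I₂₂ ≤ C₂ ∧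
        R ∘L T ∘L S ∉ I₂₂ ∧
        (R ∘L T ∘L S) ∘L (R ∘L T ∘L S) - R ∘L T ∘L S ∈ I₂₂) :
    ∀ T : WithLp 1 (X₁ × X₂) →L[𝕜] WithLp 1 (X₁ × X₂),
      Metric.infDist T (I : Set (WithLp 1 (X₁ × X₂) →L[𝕜] WithLp 1 (X₁ × X₂))) = 1 →
        ∃ U V : WithLp 1 (X₁ × X₂) →L[𝕜] WithLp 1 (X₁ × X₂),
          Metric.infDist U (I : Set (WithLp 1 (X₁ × X₂) →L[𝕜] WithLp 1 (X₁ × X₂))) *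
              Metric.infDist V (I : Set (WithLp 1 (X₁ × X₂) →L[𝕜] WithLp 1 (X₁ × X₂))) ≤
            max C₁ C₂ ∧
          U ∘L T ∘L V ∉ I ∧
          (U ∘L T ∘L V) ∘L (U ∘L T ∘L V) - U ∘L T ∘L V ∈ I :=
  statement15_general J₁ J₂ Q₁ Q₂ hJ₁ hJ₂ hQ₁ hQ₂ I hI_ideal I₁₁ hI₁₁ I₂₂ hI₂₂ hI₁₂ hI₂₁ C₁ C₂ h₁ h₂
end
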